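/- arXiv:1904.07297 — 4 statements merged into one kernel-verified Lean document; each statement's English description precedes it below -/
import Mathlib

section
/- Let m, n ≥ 1 with m ≠ n, let q, d ∈ ℂ be nonzero with q² ≠ 1, and let r be a nonzero integer. Then the (m+n)×(m+n) complex matrix whose (i,j) entry is [r·A_{i,j}] · d^{−r·M_{i,j}}, for 0 ≤ i, j ≤ m+n−1, is invertible if and only if q^{2r} ≠ 1, (d·q^{−1})^{r(m−n)} ≠ 1, and (d·q)^{r(m−n)} ≠ 1. -/
open Matrix


/-- The affine Cartan matrix `Â` of `ŝl(m|n)` with standard parity: entry `A_{i,j}`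
for indices `i, j` read modulo `m+n`. -/
def cartanA (m n i j : ℕ) : ℤ :=
  if i % (m + n) = j % (m + n) then
    (if i % (m + n) = 0 ∨ i % (m + n) = m then 0
     else if i % (m + n) < m then 2 else -2)
  else if j % (m + n) = (i + 1) % (m + n) then (if i % (m + n) < m then -1 else 1)
  else if i % (m + n) = (j + 1) % (m + n) then (if j % (m + n) < m then -1 else 1)
  else 0

/-- The skew-symmetric matrix `M̂`: `M_{i-1,i} = -1`, `M_{i,i-1} = 1` for `1 ≤ i ≤ m`;
`M_{j-1,j} = 1`, `M_{j,j-1} = -1` for `j ∈ {m+1,…,m+n-1} ∪ {0}` (indices mod `m+n`);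
`M_{i,j} = 0` if `j` is not congruent to `i ± 1` modulo `m+n`. -/
def cartanM (m n i j : ℕ) : ℤ :=
  if j % (m + n) = (i + 1) % (m + n) then (if i % (m + n) < m then -1 else 1)
  else if i % (m + n) = (j + 1) % (m + n) then (if j % (m + n) < m then 1 else -1)
  else 0

/-- The `q`-integer `[k] = (q^k - q^{-k})/(q - q⁻¹)`. -/
noncomputable def qint (q : ℂ) (k : ℤ) : ℂ := (q ^ k - q ^ (-k)) / (q - q⁻¹)

/-- The `(m+n) × (m+n)` matrix with entries `[r A_{i,j}] d^{-r M_{i,j}}`. -/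
noncomputable def toroidalMat (m n : ℕ) (q d : ℂ) (r : ℤ) :
    Matrix (Fin (m + n)) (Fin (m + n)) ℂ :=
  Matrix.of fun i j =>
    qint q (r * cartanA m n i.val j.val) * d ^ (-(r * cartanM m n i.val j.val))

lemma fin_one_ne_zero {N : ℕ} (hN : 2 ≤ N) [NeZero N] : (1 : Fin N) ≠ 0 := by
  intro h
  have := congrArg Fin.val h
  rw [Fin.val_one', Fin.val_zero, Nat.mod_eq_of_lt hN] at this
  exact one_ne_zero this

open Fin.NatCast Fin.CommRing in
lemma perm_shift_char {N : ℕ} (hN : 2 ≤ N) [NeZero N] (σ : Equiv.Perm (Fin N))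
    (h : ∀ i, σ i = i ∨ σ i = i - 1) (h2 : ∃ i, σ i ≠ i) : ∀ i, σ i = i - 1 := by
  obtain ⟨i₀, hi₀⟩ := h2
  have hσi₀ : σ i₀ = i₀ - 1 := (h i₀).resolve_left hi₀
  have h10 := fin_one_ne_zero hN (N := N)
  have key : ∀ k : ℕ, σ (i₀ - (k : Fin N)) = i₀ - (k : Fin N) - 1 := by
    intro k; induction k with
    | zero => simpa using hσi₀
    | succ k ih =>
      have hc : ((k + 1 : ℕ) : Fin N) = (k : Fin N) + 1 := by push_cast; ring
      rw [hc]
      rcases h (i₀ - ((k : Fin N) + 1)) with h' | h'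
      · exfalso
        have heq : i₀ - (k : Fin N) = i₀ - ((k : Fin N) + 1) := by
          apply σ.injective
          rw [ih, h']; ring_nf
        have : (1 : Fin N) = 0 := by
          have h2 := congrArg (fun x => i₀ - (k : Fin N) - x) heq
          simpa using h2.symm
        exact h10 this
      · rw [h']
  intro j
  have := key ((i₀ - j : Fin N)).val
  rwa [Fin.cast_val_eq_self, sub_sub_cancel] at this

open Fin.NatCast Fin.CommRing in
lemma det_bidiag_cyclic {N : ℕ} [NeZero N] (hN : 2 ≤ N) (u v : Fin N → ℂ) :
    (Matrix.of fun i j : Fin N =>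
        (if j = i then u i else 0) + (if j = i + 1 then v i else 0)).det
      = ∏ i, u i + (-1) ^ (N - 1) * ∏ i, v i := by
  obtain ⟨K, rfl⟩ : ∃ K, N = K + 1 := ⟨N - 1, by omega⟩
  have h10 : (1 : Fin (K + 1)) ≠ 0 := fin_one_ne_zero hN
  have hne1 : ∀ i : Fin (K + 1), i ≠ i + 1 := by
    intro i h
    apply h10
    have := congrArg (fun x => x - i) h
    simpa using this.symm
  have hne2 : ∀ i : Fin (K + 1), i ≠ i - 1 := by
    intro i h
    apply h10
    have := congrArg (fun x => i - x) h
    simpa using this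
  set ρ : Equiv.Perm (Fin (K + 1)) := (finRotate (K + 1))⁻¹ with hρdef
  have hρ : ∀ i, ρ i = i - 1 := by
    intro i
    have h1 : finRotate (K + 1) (i - 1) = i := by rw [finRotate_succ_apply]; ring
    conv_lhs => rw [hρdef, ← h1]
    exact (finRotate (K + 1)).symm_apply_apply _
  have hne : (1 : Equiv.Perm (Fin (K + 1))) ≠ ρ := by
    intro h
    exact hne2 0 ((Equiv.ext_iff.mp h 0).trans (hρ 0))
  rw [Matrix.det_apply]
  rw [← Finset.sum_subset (Finset.subset_univ ({1, ρ} : Finset (Equiv.Perm (Fin (K + 1)))))]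
  · rw [Finset.sum_pair hne]
    have hterm1 : ∀ i : Fin (K + 1),
        (Matrix.of fun i j : Fin (K + 1) =>
          (if j = i then u i else 0) + (if j = i + 1 then v i else 0))
            ((1 : Equiv.Perm (Fin (K + 1))) i) i = u i := by
      intro i
      simp [Matrix.of_apply, if_neg (hne1 i)]
      intro h
      exact absurd h (by omega)
    have htermρ : ∀ i : Fin (K + 1),
        (Matrix.of fun i j : Fin (K + 1) =>
          (if j = i then u i else 0) + (if j = i + 1 then v i else 0)) (ρ i) i = v (i - 1) := by
      intro i
      rw [hρ i]
      simp only [Matrix.of_apply]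
      rw [if_neg (hne2 i), if_pos (by ring), zero_add]
    have hprodρ : ∏ i, v (i - 1) = ∏ i, v i :=
      Equiv.prod_comp (Equiv.subRight (1 : Fin (K + 1))) v
    rw [Finset.prod_congr rfl (fun i _ => hterm1 i), Finset.prod_congr rfl (fun i _ => htermρ i)]
    rw [hprodρ, Equiv.Perm.sign_one, Equiv.Perm.sign_inv, sign_finRotate]
    simp [Units.smul_def]
  · intro σ _ hσ
    by_cases hall : ∀ i, σ i = i ∨ σ i = i - 1
    · exfalso
      apply hσ
      by_cases hid : ∀ i, σ i = i
      · have : σ = 1 := Equiv.ext fun i => hid i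
        simp [this]
      · push_neg at hid
        have hsh := perm_shift_char hN σ hall hid
        have : σ = ρ := Equiv.ext fun i => (hsh i).trans (hρ i).symm
        simp [this]
    · push_neg at hall
      obtain ⟨i, hi1, hi2⟩ := hall
      have hz : (Matrix.of fun i j : Fin (K + 1) =>
          (if j = i then u i else 0) + (if j = i + 1 then v i else 0)) (σ i) i = 0 := by
        simp only [Matrix.of_apply]
        rw [if_neg (fun h => hi1 h.symm), if_neg, add_zero]
        intro h
        exact hi2 (eq_sub_iff_add_eq.mpr h.symm)
      apply smul_eq_zero_of_right
      apply Finset.prod_eq_zero (Finset.mem_univ i)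
      exact hz

section cartanEval

variable {m n a b : ℕ}

lemma modchar (hN : 1 ≤ m + n) (a : ℕ) (ha : a < m + n) :
    (a + 1) % (m + n) = a + 1 ∨ ((a + 1) % (m + n) = 0 ∧ a + 1 = m + n) := by
  rcases Nat.lt_or_ge (a + 1) (m + n) with h | h
  · exact Or.inl (Nat.mod_eq_of_lt h)
  · right
    have h2 : a + 1 = m + n := by omega
    simp [h2]

lemma cartanA_diag (ha : a < m + n) :
    cartanA m n a a = if a = 0 ∨ a = m then 0 else if a < m then 2 else -2 := by
  simp only [cartanA, Nat.mod_eq_of_lt ha, if_pos rfl, if_true]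

lemma cartanM_diag (hN : 2 ≤ m + n) (ha : a < m + n) : cartanM m n a a = 0 := by
  have hP := modchar (by omega) a ha
  simp only [cartanM, Nat.mod_eq_of_lt ha]
  split_ifs <;> omega

lemma cartanA_succ (hN : 3 ≤ m + n) (ha : a < m + n) (hb : b < m + n)
    (hab : b = (a + 1) % (m + n)) :
    cartanA m n a b = if a < m then -1 else 1 := by
  have hP := modchar (by omega) a ha
  have hQ := modchar (by omega) b hb
  simp only [cartanA, Nat.mod_eq_of_lt ha, Nat.mod_eq_of_lt hb]
  split_ifs <;> omega

lemma cartanM_succ (hN : 3 ≤ m + n) (ha : a < m + n) (hb : b < m + n)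
    (hab : b = (a + 1) % (m + n)) :
    cartanM m n a b = if a < m then -1 else 1 := by
  have hP := modchar (by omega) a ha
  have hQ := modchar (by omega) b hb
  simp only [cartanM, Nat.mod_eq_of_lt ha, Nat.mod_eq_of_lt hb]
  split_ifs <;> omega

lemma cartanA_pred (hN : 3 ≤ m + n) (ha : a < m + n) (hb : b < m + n)
    (hab : a = (b + 1) % (m + n)) :
    cartanA m n a b = if b < m then -1 else 1 := by
  have hP := modchar (by omega) a ha
  have hQ := modchar (by omega) b hb
  simp only [cartanA, Nat.mod_eq_of_lt ha, Nat.mod_eq_of_lt hb]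
  split_ifs <;> omega

lemma cartanM_pred (hN : 3 ≤ m + n) (ha : a < m + n) (hb : b < m + n)
    (hab : a = (b + 1) % (m + n)) :
    cartanM m n a b = if b < m then 1 else -1 := by
  have hP := modchar (by omega) a ha
  have hQ := modchar (by omega) b hb
  simp only [cartanM, Nat.mod_eq_of_lt ha, Nat.mod_eq_of_lt hb]
  split_ifs <;> omega

lemma cartanA_other (ha : a < m + n) (hb : b < m + n) (h0 : a ≠ b)
    (h1 : b ≠ (a + 1) % (m + n)) (h2 : a ≠ (b + 1) % (m + n)) :
    cartanA m n a b = 0 := by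
  simp only [cartanA, Nat.mod_eq_of_lt ha, Nat.mod_eq_of_lt hb]
  split_ifs <;> omega

lemma cartanM_other (ha : a < m + n) (hb : b < m + n)
    (h1 : b ≠ (a + 1) % (m + n)) (h2 : a ≠ (b + 1) % (m + n)) :
    cartanM m n a b = 0 := by
  simp only [cartanM, Nat.mod_eq_of_lt ha, Nat.mod_eq_of_lt hb]
  split_ifs <;> omega

end cartanEval

lemma fin_eq_add_one_iff {N : ℕ} [NeZero N] (hN : 2 ≤ N) (i j : Fin N) :
    j = i + 1 ↔ (j : ℕ) = ((i : ℕ) + 1) % N := by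
  rw [Fin.ext_iff, Fin.val_add, Fin.val_one', Nat.mod_eq_of_lt hN]

lemma fin_ne_add_two {N : ℕ} [NeZero N] (hN : 3 ≤ N) (i : Fin N) : i ≠ i + 1 + 1 := by
  intro h
  rw [fin_eq_add_one_iff (by omega) (i + 1) i] at h
  rw [Fin.val_add, Fin.val_one', Nat.mod_eq_of_lt (by omega : 1 < N)] at h
  have hP := modchar (m := N) (n := 0) (by omega) i.val (by simpa using i.isLt)
  have hQ := modchar (m := N) (n := 0) (by omega) ((i.val + 1) % N)
    (by exact Nat.mod_lt _ (by omega))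
  simp only [Nat.add_zero] at hP hQ
  have := i.isLt
  omega

lemma fin_ne_add_one {N : ℕ} [NeZero N] (hN : 2 ≤ N) (i : Fin N) : i ≠ i + 1 := by
  intro h
  rw [fin_eq_add_one_iff hN i i] at h
  have hP := modchar (m := N) (n := 0) (by omega) i.val (by simpa using i.isLt)
  simp only [Nat.add_zero] at hP
  have := i.isLt
  omega

noncomputable def matU (m n : ℕ) [NeZero (m + n)] (q d : ℂ) (r : ℤ) :
    Matrix (Fin (m + n)) (Fin (m + n)) ℂ :=
  Matrix.of fun i j =>
    (if j = i then qint q r * (if ¬i.val = 0 ∧ i.val ≤ m then q ^ r else -(q ^ r)⁻¹) else 0)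
    + (if j = i + 1 then
        (if i.val < m then -(qint q r * d ^ r) else qint q r * (d ^ r)⁻¹) else 0)

noncomputable def matW (m n : ℕ) [NeZero (m + n)] (q d : ℂ) (r : ℤ) :
    Matrix (Fin (m + n)) (Fin (m + n)) ℂ :=
  Matrix.of fun i j =>
    (if j = i then 1 else 0)
    + (if j = i + 1 then
        (if i.val < m then -((d ^ r)⁻¹ * (q ^ r)⁻¹) else -(d ^ r * q ^ r)) else 0)

set_option maxHeartbeats 1000000 in
lemma toroidal_factor (m n : ℕ) [NeZero (m + n)] (hm : 1 ≤ m) (hn : 1 ≤ n)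
    (hN : 3 ≤ m + n) (q d : ℂ) (hq : q ≠ 0) (hd : d ≠ 0) (hq2 : q ^ 2 ≠ 1) (r : ℤ) :
    toroidalMat m n q d r = matU m n q d r * (matW m n q d r)ᵀ := by
  have hA : q ^ r ≠ 0 := zpow_ne_zero r hq
  have hT : d ^ r ≠ 0 := zpow_ne_zero r hd
  have hqq : q - q⁻¹ ≠ 0 := by
    intro h
    apply hq2
    have h2 : q = q⁻¹ := sub_eq_zero.mp h
    calc q ^ 2 = q * q := sq q
    _ = q * q⁻¹ := by rw [← h2]
    _ = 1 := mul_inv_cancel₀ hq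
  have hqsq : q * q - 1 ≠ 0 := fun h => hq2 (by rw [sq, sub_eq_zero.mp h])
  ext i j
  rw [Matrix.mul_apply]
  have hsum : (∑ k, matU m n q d r i k * (matW m n q d r)ᵀ k j)
      = (qint q r * (if ¬i.val = 0 ∧ i.val ≤ m then q ^ r else -(q ^ r)⁻¹)) * (matW m n q d r)ᵀ i j
        + (if i.val < m then -(qint q r * d ^ r) else qint q r * (d ^ r)⁻¹) * (matW m n q d r)ᵀ (i + 1) j := by
    simp only [matU, Matrix.of_apply, add_mul, ite_mul, zero_mul]
    rw [Finset.sum_add_distrib, Finset.sum_ite_eq' Finset.univ i, Finset.sum_ite_eq' Finset.univ (i + 1)]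
    simp
  rw [hsum]
  clear hsum
  simp only [Matrix.transpose_apply, matW, Matrix.of_apply]
  have hvi := i.isLt
  have hvj := j.isLt
  have hP := modchar (m := m) (n := n) (by omega) i.val hvi
  have hQ := modchar (m := m) (n := n) (by omega) j.val hvj
  by_cases hij : i = j
  · subst hij
    have e1 : (i = i + 1) = False := eq_false (fin_ne_add_one (by omega) i)
    have e2 : (i + 1 = i) = False := eq_false fun h => fin_ne_add_one (by omega) i h.symm
    simp only [e1, e2, if_false, eq_self_iff_true, if_true]
    rw [toroidalMat, Matrix.of_apply, cartanA_diag hvi, cartanM_diag (by omega) hvi]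
    rw [mul_zero, neg_zero, zpow_zero, mul_one]
    rcases Nat.lt_trichotomy i.val m with hlt | heq | hgt
    · by_cases h0 : i.val = 0
      · simp only [eq_true (Or.inl h0 : (i:ℕ) = 0 ∨ (i:ℕ) = m), eq_true hlt,
          eq_false (by omega : ¬(¬(i:ℕ) = 0 ∧ (i:ℕ) ≤ m)), if_true, if_false]
        simp only [qint, mul_zero, zpow_zero, neg_zero, sub_self, zero_div]
        field_simp [hqsq]
        ring_nf
      · simp only [eq_false (by omega : ¬((i:ℕ) = 0 ∨ (i:ℕ) = m)), eq_true hlt,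
          eq_true (by omega : ¬(i:ℕ) = 0 ∧ (i:ℕ) ≤ m), if_true, if_false]
        simp only [qint]
        rw [show r * 2 = r + r from by ring, show -(r + r) = -r + -r from by ring,
          zpow_add₀ hq, zpow_add₀ hq, _root_.zpow_neg]
        field_simp [hqsq]
        ring_nf
    · simp only [eq_true (Or.inr heq : (i:ℕ) = 0 ∨ (i:ℕ) = m),
        eq_false (by omega : ¬(i:ℕ) < m), eq_true (by omega : ¬(i:ℕ) = 0 ∧ (i:ℕ) ≤ m),
        if_true, if_false]
      simp only [qint, mul_zero, zpow_zero, neg_zero, sub_self, zero_div]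
      field_simp [hqsq]
      ring_nf
    · simp only [eq_false (by omega : ¬((i:ℕ) = 0 ∨ (i:ℕ) = m)),
        eq_false (by omega : ¬(i:ℕ) < m), eq_false (by omega : ¬(¬(i:ℕ) = 0 ∧ (i:ℕ) ≤ m)),
        if_false]
      simp only [qint]
      rw [show r * -2 = -r + -r from by ring, show -(-r + -r) = r + r from by ring,
        zpow_add₀ hq, zpow_add₀ hq, _root_.zpow_neg]
      field_simp [hqsq]
      ring_nf
  · by_cases hsucc : j = i + 1
    · subst hsucc
      have hval : ((i + 1 : Fin (m + n)) : ℕ) = ((i : ℕ) + 1) % (m + n) :=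
        (fin_eq_add_one_iff (by omega) i (i + 1)).mp rfl
      have e1 : (i = i + 1) = False := eq_false (fin_ne_add_one (by omega) i)
      have e2 : (i = i + 1 + 1) = False := eq_false (fin_ne_add_two (by omega) i)
      have e3 : (i + 1 = i + 1 + 1) = False := eq_false (fin_ne_add_one (by omega) (i + 1))
      simp only [e1, e2, e3, if_false, eq_self_iff_true, if_true]
      rw [toroidalMat, Matrix.of_apply, cartanA_succ (by omega) hvi ((i + 1 : Fin (m+n)).isLt) hval,
        cartanM_succ (by omega) hvi ((i + 1 : Fin (m+n)).isLt) hval]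
      by_cases hlt : i.val < m
      · simp only [eq_true hlt, if_true]
        simp only [qint]
        rw [show r * -1 = -r from by ring, neg_neg, _root_.zpow_neg]
        field_simp [hqsq]
        ring_nf
      · simp only [eq_false hlt, if_false]
        simp only [qint]
        rw [show r * 1 = r from by ring, _root_.zpow_neg, _root_.zpow_neg]
        field_simp [hqsq]
        ring
    · by_cases hpred : i = j + 1
      · subst hpred
        have hval : ((j + 1 : Fin (m + n)) : ℕ) = ((j : ℕ) + 1) % (m + n) :=
          (fin_eq_add_one_iff (by omega) j (j + 1)).mp rfl
        have e1 : (j + 1 = j) = False := eq_false fun h => fin_ne_add_one (by omega) j h.symm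
        have e2 : (j + 1 + 1 = j) = False := eq_false fun h => fin_ne_add_two (by omega) j h.symm
        have e3 : (j + 1 + 1 = j + 1) = False := eq_false fun h => fin_ne_add_one (by omega) (j + 1) h.symm
        simp only [e1, e2, e3, if_false, eq_self_iff_true, if_true]
        rw [toroidalMat, Matrix.of_apply,
          cartanA_pred (by omega) ((j + 1 : Fin (m+n)).isLt) hvj hval,
          cartanM_pred (by omega) ((j + 1 : Fin (m+n)).isLt) hvj hval]
        have hQ' := modchar (m := m) (n := n) (by omega) j.val hvj
        by_cases hlt : j.val < m
        · simp only [eq_true hlt, if_true,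
            eq_true (show ¬((j + 1 : Fin (m+n)) : ℕ) = 0 ∧ ((j + 1 : Fin (m+n)) : ℕ) ≤ m from by
              rw [hval]; omega), if_true]
          simp only [qint]
          rw [show r * -1 = -r from by ring, show -(r * 1) = -r from by ring, _root_.zpow_neg,
            _root_.zpow_neg]
          field_simp [hqsq]
          ring_nf
          simp only [_root_.zpow_neg]
          field_simp
          ring
        · simp only [eq_false hlt, if_false,
            eq_false (show ¬(¬((j + 1 : Fin (m+n)) : ℕ) = 0 ∧ ((j + 1 : Fin (m+n)) : ℕ) ≤ m) from by
              rw [hval]; omega), if_false]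
          simp only [qint]
          rw [show r * 1 = r from by ring, show -(r * -1) = r from by ring]
          field_simp [hqsq]
          ring_nf
      · have hv1 : (j : ℕ) ≠ ((i : ℕ) + 1) % (m + n) :=
          fun h => hsucc ((fin_eq_add_one_iff (by omega) i j).mpr h)
        have hv2 : (i : ℕ) ≠ ((j : ℕ) + 1) % (m + n) :=
          fun h => hpred ((fin_eq_add_one_iff (by omega) j i).mpr h)
        have e1 : (i = j) = False := eq_false hij
        have e2 : (i = j + 1) = False := eq_false hpred
        have e3 : (i + 1 = j) = False := eq_false fun h => hsucc h.symm
        have e4 : (i + 1 = j + 1) = False := eq_false fun h => hij ((add_left_inj 1).mp h)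
        simp only [e1, e2, e3, e4, if_false, add_zero, mul_zero, zero_add]
        rw [toroidalMat, Matrix.of_apply,
          cartanA_other hvi hvj (fun h => hij (Fin.ext h)) hv1 hv2,
          cartanM_other hvi hvj hv1 hv2]
        simp [qint]

lemma prod_if_val {N M : ℕ} (x y : ℂ) (p : ℕ → Prop) [DecidablePred p]
    (hcard : ((Finset.range N).filter p).card = M) :
    (∏ i : Fin N, if p i.val then x else y) = x ^ M * y ^ (N - M) := by
  rw [Fin.prod_univ_eq_prod_range (fun k => if p k then x else y) N]
  rw [Finset.prod_ite, Finset.prod_const, Finset.prod_const, hcard]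
  congr 1
  rw [Finset.filter_not, Finset.card_sdiff_of_subset (Finset.filter_subset p (Finset.range N)),
    Finset.card_range, hcard]

lemma toroidal_det (m n : ℕ) [NeZero (m + n)] (hm : 1 ≤ m) (hn : 1 ≤ n)
    (hN : 3 ≤ m + n) (q d : ℂ) (hq : q ≠ 0) (hd : d ≠ 0) (hq2 : q ^ 2 ≠ 1) (r : ℤ) :
    (toroidalMat m n q d r).det =
      (qint q r ^ (m + n) * ((q ^ r) ^ m * (-(q ^ r)⁻¹) ^ n)
        + (-1) ^ (m + n - 1) * ((-(qint q r * d ^ r)) ^ m * (qint q r * (d ^ r)⁻¹) ^ n))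
      * (1 + (-1) ^ (m + n - 1) * ((-((d ^ r)⁻¹ * (q ^ r)⁻¹)) ^ m * (-(d ^ r * q ^ r)) ^ n)) := by
  have card1 : ((Finset.range (m + n)).filter (fun k => ¬k = 0 ∧ k ≤ m)).card = m := by
    have he : (Finset.range (m + n)).filter (fun k => ¬k = 0 ∧ k ≤ m) = Finset.Icc 1 m := by
      ext k
      simp only [Finset.mem_filter, Finset.mem_range, Finset.mem_Icc]
      omega
    rw [he, Nat.card_Icc]
    omega
  have card2 : ((Finset.range (m + n)).filter (fun k => k < m)).card = m := by
    have he : (Finset.range (m + n)).filter (fun k => k < m) = Finset.range m := by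
      ext k
      simp only [Finset.mem_filter, Finset.mem_range]
      omega
    rw [he, Finset.card_range]
  rw [toroidal_factor m n hm hn hN q d hq hd hq2 r, Matrix.det_mul, Matrix.det_transpose]
  rw [matU, matW, det_bidiag_cyclic (by omega), det_bidiag_cyclic (by omega)]
  congr 1
  · congr 1
    · rw [Finset.prod_mul_distrib, Finset.prod_const, Finset.card_univ, Fintype.card_fin,
        prod_if_val (q ^ r) (-(q ^ r)⁻¹) (fun k => ¬k = 0 ∧ k ≤ m) card1,
        show m + n - m = n from by omega]
    · congr 1
      rw [prod_if_val (-(qint q r * d ^ r)) (qint q r * (d ^ r)⁻¹) (fun k => k < m) card2,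
        show m + n - m = n from by omega]
  · congr 1
    · exact Finset.prod_const_one
    · congr 1
      rw [prod_if_val (-((d ^ r)⁻¹ * (q ^ r)⁻¹)) (-(d ^ r * q ^ r)) (fun k => k < m) card2,
        show m + n - m = n from by omega]

set_option maxHeartbeats 1000000 in
/-- The matrix `([r A_{i,j}] d^{-r M_{i,j}})_{0 ≤ i,j ≤ m+n-1}` is invertible if and
only if `q^{2r} ≠ 1`, `(d q^{-1})^{r(m-n)} ≠ 1` and `(d q)^{r(m-n)} ≠ 1`. -/
theorem toroidalMat_invertible_iff (m n : ℕ) (hm : 1 ≤ m) (hn : 1 ≤ n) (hmn : m ≠ n)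
    (q d : ℂ) (hq : q ≠ 0) (hd : d ≠ 0) (hq2 : q ^ 2 ≠ 1) (r : ℤ) (hr : r ≠ 0) :
    IsUnit (toroidalMat m n q d r) ↔
      q ^ (2 * r) ≠ 1 ∧ (d * q⁻¹) ^ (r * ((m : ℤ) - n)) ≠ 1
        ∧ (d * q) ^ (r * ((m : ℤ) - n)) ≠ 1 := by
  haveI : NeZero (m + n) := ⟨by omega⟩
  have hN : 3 ≤ m + n := by omega
  have hA : q ^ r ≠ 0 := zpow_ne_zero r hq
  have hT : d ^ r ≠ 0 := zpow_ne_zero r hd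
  have hqq : q - q⁻¹ ≠ 0 := by
    intro h
    apply hq2
    have h2 : q = q⁻¹ := sub_eq_zero.mp h
    calc q ^ 2 = q * q := sq q
    _ = q * q⁻¹ := by rw [← h2]
    _ = 1 := mul_inv_cancel₀ hq
  rw [Matrix.isUnit_iff_isUnit_det, isUnit_iff_ne_zero, toroidal_det m n hm hn hN q d hq hd hq2 r]
  have hF : (qint q r ^ (m + n) * ((q ^ r) ^ m * (-(q ^ r)⁻¹) ^ n)
        + (-1) ^ (m + n - 1) * ((-(qint q r * d ^ r)) ^ m * (qint q r * (d ^ r)⁻¹) ^ n))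
      * (1 + (-1) ^ (m + n - 1) * ((-((d ^ r)⁻¹ * (q ^ r)⁻¹)) ^ m * (-(d ^ r * q ^ r)) ^ n))
      = qint q r ^ (m + n) * (-1) ^ n
        * ((q ^ r) ^ m * ((q ^ r) ^ n)⁻¹ - (d ^ r) ^ m * ((d ^ r) ^ n)⁻¹)
        * (1 - ((d ^ r) ^ n * (q ^ r) ^ n) * ((d ^ r) ^ m * (q ^ r) ^ m)⁻¹) := by
    have hmn1 : 1 ≤ m + n := by omega
    rcases Nat.even_or_odd m with hme | hmo <;> rcases Nat.even_or_odd n with hne | hno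
    · have hp : Odd (m + n - 1) := by
        rcases hme with ⟨a, ha⟩; rcases hne with ⟨b, hb⟩; exact ⟨a + b - 1, by omega⟩
      simp only [neg_pow, mul_pow, inv_pow, hme.neg_one_pow, hne.neg_one_pow, hp.neg_one_pow]
      field_simp
      ring
    · have hp : Even (m + n - 1) := by
        rcases hme with ⟨a, ha⟩; rcases hno with ⟨b, hb⟩; exact ⟨a + b, by omega⟩
      simp only [neg_pow, mul_pow, inv_pow, hme.neg_one_pow, hno.neg_one_pow, hp.neg_one_pow]
      field_simp
      ring
    · have hp : Even (m + n - 1) := by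
        rcases hmo with ⟨a, ha⟩; rcases hne with ⟨b, hb⟩; exact ⟨a + b, by omega⟩
      simp only [neg_pow, mul_pow, inv_pow, hmo.neg_one_pow, hne.neg_one_pow, hp.neg_one_pow]
      field_simp
      ring
    · have hp : Odd (m + n - 1) := by
        rcases hmo with ⟨a, ha⟩; rcases hno with ⟨b, hb⟩; exact ⟨a + b, by omega⟩
      simp only [neg_pow, mul_pow, inv_pow, hmo.neg_one_pow, hno.neg_one_pow, hp.neg_one_pow]
      field_simp
      ring
  rw [hF]
  have key : ∀ x : ℂ, x ≠ 0 → (x ^ (r * ((m : ℤ) - n)) = 1 ↔ (x ^ r) ^ m = (x ^ r) ^ n) := by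
    intro x hx
    rw [_root_.zpow_mul, zpow_sub₀ (zpow_ne_zero r hx), zpow_natCast, zpow_natCast,
      div_eq_one_iff_eq (pow_ne_zero n (zpow_ne_zero r hx))]
  have hci : qint q r ^ (m + n) ≠ 0 ↔ q ^ (2 * r) ≠ 1 := by
    rw [pow_ne_zero_iff (by omega : m + n ≠ 0), not_iff_not.symm]
    push_neg
    rw [qint, div_eq_zero_iff, or_iff_left hqq, sub_eq_zero, _root_.zpow_neg, two_mul,
      zpow_add₀ hq]
    constructor
    · intro h
      calc q ^ r * q ^ r = q ^ r * (q ^ r)⁻¹ := by rw [← h]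
      _ = 1 := mul_inv_cancel₀ hA
    · intro h
      exact eq_inv_of_mul_eq_one_left h
  have hFi : (q ^ r) ^ m * ((q ^ r) ^ n)⁻¹ - (d ^ r) ^ m * ((d ^ r) ^ n)⁻¹ ≠ 0
      ↔ (d * q⁻¹) ^ (r * ((m : ℤ) - n)) ≠ 1 := by
    rw [not_iff_not.symm]
    push_neg
    rw [key (d * q⁻¹) (by simp [hd, hq]), sub_eq_zero]
    rw [mul_zpow, _root_.inv_zpow, mul_pow, mul_pow, inv_pow, inv_pow,
      ← div_eq_mul_inv, ← div_eq_mul_inv, ← div_eq_mul_inv, ← div_eq_mul_inv,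
      div_eq_div_iff (pow_ne_zero n hA) (pow_ne_zero n hT),
      div_eq_div_iff (pow_ne_zero m hA) (pow_ne_zero n hA)]
    constructor <;> intro h <;> linear_combination -h
  have hGi : 1 - ((d ^ r) ^ n * (q ^ r) ^ n) * ((d ^ r) ^ m * (q ^ r) ^ m)⁻¹ ≠ 0
      ↔ (d * q) ^ (r * ((m : ℤ) - n)) ≠ 1 := by
    rw [not_iff_not.symm]
    push_neg
    rw [key (d * q) (mul_ne_zero hd hq), sub_eq_zero, eq_comm,
      mul_inv_eq_one₀ (mul_ne_zero (pow_ne_zero m hT) (pow_ne_zero m hA)),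
      mul_zpow, mul_pow, mul_pow]
    constructor <;> intro h <;> linear_combination -h
  rw [mul_ne_zero_iff, mul_ne_zero_iff, mul_ne_zero_iff, hci, hFi, hGi]
  have hs : ((-1 : ℂ)) ^ n ≠ 0 := pow_ne_zero _ (by norm_num)
  tauto
end

section
/- Let m, n ≥ 1 with m ≠ n, let r be a nonzero integer, and let q, d ∈ ℂ be nonzero with q² ≠ 1, q^{2r} ≠ 1, (d·q^{−1})^{r(m−n)} ≠ 1, and (d·q)^{r(m−n)} ≠ 1. Then the set of vectors (γ_0, …, γ_{m+n−1}) ∈ ℂ^{m+n} satisfying the m+n−1 linear equations ∑_{i=0}^{m+n−1} γ_i · [r·A_{i,j}] · d^{−r·M_{i,j}} = 0 for every j ∈ {1, …, m+n−1} is a one-dimensional linear subspace of ℂ^{m+n}. -/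
/-! ### Auxiliary lemmas -/

lemma qint_neg (q : ℂ) (k : ℤ) : qint q (-k) = - qint q k := by
  unfold qint; rw [neg_neg, ← neg_sub, neg_div]

lemma qint_zero (q : ℂ) : qint q 0 = 0 := by simp [qint]

lemma den_ne (q : ℂ) (hq : q ≠ 0) (hq2 : q ^ 2 ≠ 1) : q - q⁻¹ ≠ 0 := by
  intro h
  apply hq2
  have h1 : q = q⁻¹ := by linear_combination h
  calc q ^ 2 = q * q := sq q
  _ = q * q⁻¹ := by rw [← h1]
  _ = 1 := mul_inv_cancel₀ hq

lemma num_ne (q : ℂ) (r : ℤ) (hq : q ≠ 0) (hq2r : q ^ (2 * r) ≠ 1) : q ^ r - q ^ (-r) ≠ 0 := by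
  intro h
  apply hq2r
  have h1 : q ^ r = q ^ (-r) := by linear_combination h
  calc q ^ (2 * r) = q ^ (r + r) := by ring_nf
  _ = q ^ r * q ^ r := zpow_add₀ hq r r
  _ = q ^ r * q ^ (-r) := by rw [← h1]
  _ = q ^ (r + -r) := (zpow_add₀ hq r (-r)).symm
  _ = 1 := by simp

lemma qint_r_ne (q : ℂ) (r : ℤ) (hq : q ≠ 0) (hq2 : q ^ 2 ≠ 1) (hq2r : q ^ (2 * r) ≠ 1) :
    qint q r ≠ 0 :=
  div_ne_zero (num_ne q r hq hq2r) (den_ne q hq hq2)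

lemma qint_two_mul (q : ℂ) (r : ℤ) (hq : q ≠ 0) (hq2 : q ^ 2 ≠ 1) :
    qint q (r * 2) = qint q r * (q ^ r + (q ^ r)⁻¹) := by
  have h1 : q ^ (r * 2) = q ^ r * q ^ r := by
    rw [show r * 2 = r + r by ring, zpow_add₀ hq]
  have h2 : q ^ (-(r * 2)) = q ^ (-r) * q ^ (-r) := by
    rw [show -(r * 2) = -r + -r by ring, zpow_add₀ hq]
  have h3 : q ^ (-r) = (q ^ r)⁻¹ := by rw [zpow_neg]
  have hP : q ^ r ≠ 0 := zpow_ne_zero r hq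
  have hden := den_ne q hq hq2
  unfold qint
  rw [h1, h2, h3]
  field_simp
  ring

/-- Generic model sequence: geometric in `X = D*P`, `Y = D*P⁻¹` up to index `m`,
then geometric in `X⁻¹`, `Y⁻¹` beyond. -/
noncomputable def wseq (m : ℕ) (X Y a b : ℂ) (j : ℕ) : ℂ :=
  if j ≤ m then a * X ^ j + b * Y ^ j
  else a * X ^ m * X⁻¹ ^ (j - m) + b * Y ^ m * Y⁻¹ ^ (j - m)

lemma wseq_ge (m : ℕ) (X Y a b : ℂ) (j : ℕ) (hj : m ≤ j) :
    wseq m X Y a b j = a * X ^ m * X⁻¹ ^ (j - m) + b * Y ^ m * Y⁻¹ ^ (j - m) := by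
  rcases eq_or_lt_of_le hj with h | h
  · rw [wseq, if_pos (le_of_eq h.symm), ← h]
    simp
  · rw [wseq, if_neg (by omega)]

lemma wseq_le (m : ℕ) (X Y a b : ℂ) (j : ℕ) (hj : j ≤ m) :
    wseq m X Y a b j = a * X ^ j + b * Y ^ j := by rw [wseq, if_pos hj]

lemma wseq_rec (m : ℕ) (hm : 1 ≤ m) (D P a b R : ℂ) (hD : D ≠ 0) (hP : P ≠ 0)
    (j : ℕ) (hj : 1 ≤ j) :
    (if j - 1 < m then -(R * D) else R * D⁻¹) * wseq m (D * P) (D * P⁻¹) a b (j - 1)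
      + (if j = m then 0 else if j < m then R * (P + P⁻¹) else -(R * (P + P⁻¹)))
          * wseq m (D * P) (D * P⁻¹) a b j
      + (if j < m then -(R * D⁻¹) else R * D) * wseq m (D * P) (D * P⁻¹) a b (j + 1) = 0 := by
  have hX : D * P ≠ 0 := mul_ne_zero hD hP
  have hY : D * P⁻¹ ≠ 0 := mul_ne_zero hD (inv_ne_zero hP)
  rcases lt_trichotomy j m with hlt | heq | hgt
  · obtain ⟨k, rfl⟩ : ∃ k, j = k + 1 := ⟨j - 1, by omega⟩
    rw [if_pos (by omega), if_neg (by omega), if_pos hlt, if_pos hlt,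
      Nat.add_sub_cancel, wseq_le _ _ _ _ _ _ (by omega), wseq_le _ _ _ _ _ _ (by omega),
      wseq_le _ _ _ _ _ _ (by omega)]
    have hcX : -(R * D) + R * (P + P⁻¹) * (D * P) + -(R * D⁻¹) * (D * P * (D * P)) = 0 := by
      field_simp; ring
    have hcY : -(R * D) + R * (P + P⁻¹) * (D * P⁻¹) + -(R * D⁻¹) * (D * P⁻¹ * (D * P⁻¹)) = 0 := by
      field_simp; ring
    rw [pow_succ (D * P) k, pow_succ (D * P) (k + 1), pow_succ (D * P) k,
      pow_succ (D * P⁻¹) k, pow_succ (D * P⁻¹) (k + 1), pow_succ (D * P⁻¹) k]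
    linear_combination (a * (D * P) ^ k) * hcX + (b * (D * P⁻¹) ^ k) * hcY
  · obtain ⟨l, rfl⟩ : ∃ l, m = l + 1 := ⟨m - 1, by omega⟩
    subst heq
    rw [if_pos (by omega), if_pos rfl, if_neg (lt_irrefl (l + 1)), zero_mul,
      wseq_le _ _ _ _ _ (l + 1 - 1) (by omega), wseq_ge _ _ _ _ _ (l + 1 + 1) (by omega)]
    have h1 : l + 1 + 1 - (l + 1) = 1 := by omega
    have h2 : l + 1 - 1 = l := by omega
    rw [h1, h2, pow_one, pow_one, pow_succ (D * P) l, pow_succ (D * P⁻¹) l]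
    linear_combination (R * D * a * (D * P) ^ l) * (mul_inv_cancel₀ hX)
      + (R * D * b * (D * P⁻¹) ^ l) * (mul_inv_cancel₀ hY)
  · obtain ⟨k, rfl⟩ : ∃ k, j = m + k + 1 := ⟨j - m - 1, by omega⟩
    rw [if_neg (by omega), if_neg (by omega), if_neg (by omega), if_neg (by omega),
      wseq_ge _ _ _ _ _ _ (by omega), wseq_ge _ _ _ _ _ _ (by omega),
      wseq_ge _ _ _ _ _ _ (by omega)]
    have h1 : m + k + 1 - 1 - m = k := by omega
    have h2 : m + k + 1 - m = k + 1 := by omega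
    have h3 : m + k + 1 + 1 - m = k + 1 + 1 := by omega
    rw [h1, h2, h3]
    have hcV : R * D⁻¹ + -(R * (P + P⁻¹)) * (D * P)⁻¹ + R * D * ((D * P)⁻¹ * (D * P)⁻¹) = 0 := by
      field_simp
      ring
    have hcW : R * D⁻¹ + -(R * (P + P⁻¹)) * (D * P⁻¹)⁻¹
        + R * D * ((D * P⁻¹)⁻¹ * (D * P⁻¹)⁻¹) = 0 := by
      rw [mul_inv, inv_inv]
      field_simp; ring
    rw [pow_succ ((D * P)⁻¹) k, pow_succ ((D * P)⁻¹) (k + 1), pow_succ ((D * P)⁻¹) k,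
      pow_succ ((D * P⁻¹)⁻¹) k, pow_succ ((D * P⁻¹)⁻¹) (k + 1), pow_succ ((D * P⁻¹)⁻¹) k]
    linear_combination (a * (D * P) ^ m * ((D * P)⁻¹) ^ k) * hcV
      + (b * (D * P⁻¹) ^ m * ((D * P⁻¹)⁻¹) ^ k) * hcW

lemma mod_succ_eq (m n i : ℕ) (hi : i < m + n) :
    (i + 1) % (m + n) = if i + 1 = m + n then 0 else i + 1 := by
  split_ifs with h
  · rw [h, Nat.mod_self]
  · exact Nat.mod_eq_of_lt (by omega)

lemma cartanA_eq (m n i j : ℕ) (hi : i < m + n) (hj : j < m + n) :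
    cartanA m n i j =
      if i = j then (if i = 0 ∨ i = m then 0 else if i < m then 2 else -2)
      else if j = (if i + 1 = m + n then 0 else i + 1) then (if i < m then -1 else 1)
      else if i = (if j + 1 = m + n then 0 else j + 1) then (if j < m then -1 else 1)
      else 0 := by
  rw [cartanA, Nat.mod_eq_of_lt hi, Nat.mod_eq_of_lt hj, mod_succ_eq m n i hi,
    mod_succ_eq m n j hj]

lemma cartanM_eq (m n i j : ℕ) (hi : i < m + n) (hj : j < m + n) :
    cartanM m n i j =
      if j = (if i + 1 = m + n then 0 else i + 1) then (if i < m then -1 else 1)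
      else if i = (if j + 1 = m + n then 0 else j + 1) then (if j < m then 1 else -1)
      else 0 := by
  rw [cartanM, Nat.mod_eq_of_lt hi, Nat.mod_eq_of_lt hj, mod_succ_eq m n i hi,
    mod_succ_eq m n j hj]

lemma cartan_diag (m n j : ℕ) (hN : 3 ≤ m + n) (h1 : 1 ≤ j) (h2 : j < m + n) :
    cartanA m n j j = (if j = m then 0 else if j < m then 2 else -2) ∧
    cartanM m n j j = 0 := by
  rw [cartanA_eq m n j j h2 h2, cartanM_eq m n j j h2 h2]
  constructor <;> split_ifs <;> omega

lemma cartan_sub (m n j : ℕ) (hN : 3 ≤ m + n) (h1 : 1 ≤ j) (h2 : j < m + n) :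
    cartanA m n (j - 1) j = (if j - 1 < m then -1 else 1) ∧
    cartanM m n (j - 1) j = (if j - 1 < m then -1 else 1) := by
  rw [cartanA_eq m n (j-1) j (by omega) h2, cartanM_eq m n (j-1) j (by omega) h2]
  constructor <;> split_ifs <;> omega

lemma cartan_sup (m n j : ℕ) (hm : 1 ≤ m) (hn : 1 ≤ n) (hN : 3 ≤ m + n)
    (h1 : 1 ≤ j) (h2 : j < m + n) :
    cartanA m n ((j + 1) % (m + n)) j = (if j < m then -1 else 1) ∧
    cartanM m n ((j + 1) % (m + n)) j = (if j < m then 1 else -1) := by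
  rw [mod_succ_eq m n j h2]
  rcases eq_or_lt_of_le (show j + 1 ≤ m + n by omega) with he | hlt
  · rw [if_pos he, cartanA_eq m n 0 j (by omega) h2, cartanM_eq m n 0 j (by omega) h2]
    constructor <;> split_ifs <;> omega
  · rw [if_neg (by omega), cartanA_eq m n (j + 1) j hlt h2, cartanM_eq m n (j + 1) j hlt h2]
    constructor <;> split_ifs <;> omega

lemma cartan_zero (m n i j : ℕ) (hi : i < m + n) (hj : j < m + n)
    (e1 : i ≠ j) (e2 : ¬ (j = i + 1 ∨ (i + 1 = m + n ∧ j = 0)))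
    (e3 : ¬ (i = j + 1 ∨ (j + 1 = m + n ∧ i = 0))) :
    cartanA m n i j = 0 ∧ cartanM m n i j = 0 := by
  rw [cartanA_eq m n i j hi hj, cartanM_eq m n i j hi hj]
  constructor <;> split_ifs <;> omega

/-! ### Main theorem -/

/-- Under the stated non-degeneracy conditions, the solution set of the system
`∑_{i=0}^{m+n-1} γ_i [r A_{i,j}] d^{-r M_{i,j}} = 0` for all `j ∈ {1, …, m+n-1}`
is a one-dimensional linear subspace of `ℂ^{m+n}`. -/
theorem solution_space_one_dimensional (m n : ℕ) (hm : 1 ≤ m) (hn : 1 ≤ n) (hmn : m ≠ n)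
    (r : ℤ) (hr : r ≠ 0) (q d : ℂ) (hq : q ≠ 0) (hd : d ≠ 0) (hq2 : q ^ 2 ≠ 1)
    (hq2r : q ^ (2 * r) ≠ 1)
    (hdq1 : (d * q⁻¹) ^ (r * ((m : ℤ) - n)) ≠ 1)
    (hdq2 : (d * q) ^ (r * ((m : ℤ) - n)) ≠ 1) :
    ∃ W : Submodule ℂ (Fin (m + n) → ℂ),
      (W : Set (Fin (m + n) → ℂ)) =
        {γ | ∀ j : Fin (m + n), j.val ≠ 0 →
          ∑ i : Fin (m + n),
            γ i * (qint q (r * cartanA m n i.val j.val)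
              * d ^ (-(r * cartanM m n i.val j.val))) = 0}
      ∧ Module.finrank ℂ W = 1 := by
  have hN3 : 3 ≤ m + n := by omega
  have hz0 : 0 < m + n := by omega
  have hz1 : 1 < m + n := by omega
  -- scalar setup
  set P : ℂ := q ^ r with hPdef
  set D : ℂ := d ^ r with hDdef
  have hP : P ≠ 0 := zpow_ne_zero r hq
  have hD : D ≠ 0 := zpow_ne_zero r hd
  set R : ℂ := qint q r with hRdef
  have hR : R ≠ 0 := qint_r_ne q r hq hq2 hq2r
  have hPP : q ^ (2 * r) = P * P := by rw [hPdef, two_mul, zpow_add₀ hq]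
  have hPne : P ≠ P⁻¹ := by
    intro h
    exact hq2r (by rw [hPP]; nth_rewrite 2 [h]; exact mul_inv_cancel₀ hP)
  set X : ℂ := D * P with hXdef
  set Y : ℂ := D * P⁻¹ with hYdef
  have hX : X ≠ 0 := mul_ne_zero hD hP
  have hY : Y ≠ 0 := mul_ne_zero hD (inv_ne_zero hP)
  have hXY : X - Y ≠ 0 := by
    rw [hXdef, hYdef]
    intro h
    exact hPne (mul_left_cancel₀ hD (by linear_combination h))
  -- the model sequences
  set u : ℕ → ℂ := wseq m X Y (X - Y)⁻¹ (-(X - Y)⁻¹) with hudef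
  set v : ℕ → ℂ := wseq m X Y (-(Y * (X - Y)⁻¹)) (X * (X - Y)⁻¹) with hvdef
  have hu0 : u 0 = 0 := by
    rw [hudef, wseq_le _ _ _ _ _ 0 (by omega)]; ring
  have hv0 : v 0 = 1 := by
    rw [hvdef, wseq_le _ _ _ _ _ 0 (by omega), pow_zero, pow_zero]
    field_simp
    ring
  have hu1 : u 1 = 1 := by
    rw [hudef, wseq_le _ _ _ _ _ 1 hm, pow_one, pow_one]
    field_simp
    ring
  have hv1 : v 1 = 0 := by
    rw [hvdef, wseq_le _ _ _ _ _ 1 hm, pow_one, pow_one]; ring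
  -- recurrences
  have MEu : ∀ jv : ℕ, 1 ≤ jv →
      (if jv - 1 < m then -(R * D) else R * D⁻¹) * u (jv - 1)
        + (if jv = m then 0 else if jv < m then R * (P + P⁻¹) else -(R * (P + P⁻¹))) * u jv
        + (if jv < m then -(R * D⁻¹) else R * D) * u (jv + 1) = 0 := fun jv hjv =>
    wseq_rec m hm D P _ _ R hD hP jv hjv
  have MEv : ∀ jv : ℕ, 1 ≤ jv →
      (if jv - 1 < m then -(R * D) else R * D⁻¹) * v (jv - 1)
        + (if jv = m then 0 else if jv < m then R * (P + P⁻¹) else -(R * (P + P⁻¹))) * v jv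
        + (if jv < m then -(R * D⁻¹) else R * D) * v (jv + 1) = 0 := fun jv hjv =>
    wseq_rec m hm D P _ _ R hD hP jv hjv
  -- entry values
  have entsub : ∀ jv : ℕ, 1 ≤ jv → jv < m + n →
      qint q (r * cartanA m n (jv - 1) jv) * d ^ (-(r * cartanM m n (jv - 1) jv)) =
        (if jv - 1 < m then -(R * D) else R * D⁻¹) := by
    intro jv h1 h2
    obtain ⟨hA, hM⟩ := cartan_sub m n jv hN3 h1 h2
    rw [hA, hM]
    split_ifs with h
    · rw [mul_neg_one, qint_neg, neg_neg, hRdef, hDdef]; ring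
    · rw [mul_one, zpow_neg, hRdef, hDdef]
  have entdiag : ∀ jv : ℕ, 1 ≤ jv → jv < m + n →
      qint q (r * cartanA m n jv jv) * d ^ (-(r * cartanM m n jv jv)) =
        (if jv = m then 0 else if jv < m then R * (P + P⁻¹) else -(R * (P + P⁻¹))) := by
    intro jv h1 h2
    obtain ⟨hA, hM⟩ := cartan_diag m n jv hN3 h1 h2
    rw [hA, hM, mul_zero, neg_zero, zpow_zero, mul_one]
    split_ifs with h h'
    · rw [mul_zero, qint_zero]
    · rw [hRdef, hPdef, qint_two_mul q r hq hq2]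
    · rw [show r * (-2 : ℤ) = -(r * 2) by ring, qint_neg, hRdef, hPdef,
        qint_two_mul q r hq hq2]
  have entsup : ∀ jv : ℕ, 1 ≤ jv → jv < m + n →
      qint q (r * cartanA m n ((jv + 1) % (m + n)) jv)
        * d ^ (-(r * cartanM m n ((jv + 1) % (m + n)) jv)) =
        (if jv < m then -(R * D⁻¹) else R * D) := by
    intro jv h1 h2
    obtain ⟨hA, hM⟩ := cartan_sup m n jv hm hn hN3 h1 h2
    rw [hA, hM]
    split_ifs with h
    · rw [mul_neg_one, qint_neg, mul_one, hRdef, hDdef, zpow_neg]; ring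
    · rw [mul_one, mul_neg_one, neg_neg, hRdef, hDdef]
  -- the three-term sum formula
  have sum3 : ∀ (γ : Fin (m + n) → ℂ) (jv : ℕ) (h1 : 1 ≤ jv) (h2 : jv < m + n)
      (c : Fin (m + n)) (hc : c.val = (jv + 1) % (m + n)),
      ∑ i : Fin (m + n), γ i * (qint q (r * cartanA m n i.val jv)
          * d ^ (-(r * cartanM m n i.val jv))) =
        γ ⟨jv - 1, by omega⟩ * (if jv - 1 < m then -(R * D) else R * D⁻¹)
          + γ ⟨jv, h2⟩ *
            (if jv = m then 0 else if jv < m then R * (P + P⁻¹) else -(R * (P + P⁻¹)))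
          + γ c * (if jv < m then -(R * D⁻¹) else R * D) := by
    intro γ jv h1 h2 c hc
    set a : Fin (m + n) := ⟨jv - 1, by omega⟩ with hadef
    set b : Fin (m + n) := ⟨jv, h2⟩ with hbdef
    have hcv : (jv + 1) % (m + n) = if jv + 1 = m + n then 0 else jv + 1 :=
      mod_succ_eq m n jv h2
    have hab : a ≠ b := by
      rw [Fin.ne_iff_vne, hadef, hbdef]; simp only [Fin.val_mk]; omega
    have hac : a ≠ c := by
      rw [Fin.ne_iff_vne, hadef]; simp only [Fin.val_mk]; rw [hc, hcv]
      split_ifs <;> omega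
    have hbc : b ≠ c := by
      rw [Fin.ne_iff_vne, hbdef]; simp only [Fin.val_mk]; rw [hc, hcv]
      split_ifs <;> omega
    have hvanish : ∀ x ∈ Finset.univ, x ∉ ({a, b, c} : Finset (Fin (m + n))) →
        γ x * (qint q (r * cartanA m n x.val jv) * d ^ (-(r * cartanM m n x.val jv))) = 0 := by
      intro x _ hx
      simp only [Finset.mem_insert, Finset.mem_singleton] at hx
      push_neg at hx
      obtain ⟨hxa, hxb, hxc⟩ := hx
      rw [Fin.ne_iff_vne, hadef] at hxa
      rw [Fin.ne_iff_vne, hbdef] at hxb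
      rw [Fin.ne_iff_vne] at hxc
      simp only [Fin.val_mk] at hxa hxb
      rw [hc, hcv] at hxc
      have hxlt : x.val < m + n := x.isLt
      obtain ⟨hA, hM⟩ := cartan_zero m n x.val jv hxlt h2 hxb
        (by split_ifs at hxc <;> omega) (by split_ifs at hxc <;> omega)
      rw [hA, hM, mul_zero, qint_zero, zero_mul, mul_zero]
    rw [← Finset.sum_subset (Finset.subset_univ ({a, b, c} : Finset (Fin (m + n)))) hvanish]
    rw [Finset.sum_insert (by simp [hab, hac]), Finset.sum_insert (by simp [hbc]),
      Finset.sum_singleton]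
    have ea := entsub jv h1 h2
    have eb := entdiag jv h1 h2
    have ec := entsup jv h1 h2
    rw [show a.val = jv - 1 from rfl, show b.val = jv from rfl, hc, ea, eb, ec]
    ring
  -- linear maps
  set Λ : (ℂ × ℂ) →ₗ[ℂ] (Fin (m + n) → ℂ) :=
    LinearMap.pi (fun i : Fin (m + n) =>
      v i.val • LinearMap.fst ℂ ℂ ℂ + u i.val • LinearMap.snd ℂ ℂ ℂ) with hΛdef
  have hΛ : ∀ (x : ℂ × ℂ) (i : Fin (m + n)), Λ x i = x.1 * v i.val + x.2 * u i.val := by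
    intro x i
    rw [hΛdef]
    simp [LinearMap.pi_apply, smul_eq_mul]
    ring
  set φ : (ℂ × ℂ) →ₗ[ℂ] ℂ :=
    (v (m + n) - 1) • LinearMap.fst ℂ ℂ ℂ + u (m + n) • LinearMap.snd ℂ ℂ ℂ with hφdef
  have hφ : ∀ x : ℂ × ℂ, φ x = x.1 * (v (m + n) - 1) + x.2 * u (m + n) := by
    intro x
    rw [hφdef]
    simp [smul_eq_mul]
    ring
-- continuation
  -- transformed hypothesis: X^m ≠ X^n
  have hXzp : (d * q) ^ (r : ℤ) = X := by rw [hXdef, hDdef, hPdef, mul_zpow]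
  have hXmn : X ^ m ≠ X ^ n := by
    intro h
    apply hdq2
    have e1 : (d * q) ^ (r * ((m : ℤ) - n)) = X ^ ((m : ℤ) - (n : ℤ)) := by
      rw [zpow_mul, hXzp]
    rw [e1, zpow_sub₀ hX, zpow_natCast, zpow_natCast, h, div_self (pow_ne_zero n hX)]
  -- values of u, v at m+n
  have hue : u (m + n) = (X - Y)⁻¹ * X ^ m * X⁻¹ ^ n + -(X - Y)⁻¹ * Y ^ m * Y⁻¹ ^ n := by
    rw [hudef, wseq_ge _ _ _ _ _ _ (by omega), show m + n - m = n by omega]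
  have hve : v (m + n) = -(Y * (X - Y)⁻¹) * X ^ m * X⁻¹ ^ n
      + X * (X - Y)⁻¹ * Y ^ m * Y⁻¹ ^ n := by
    rw [hvdef, wseq_ge _ _ _ _ _ _ (by omega), show m + n - m = n by omega]
  -- key nonvanishing
  have hkey : u (m + n) ≠ 0 ∨ v (m + n) - 1 ≠ 0 := by
    by_cases hu : u (m + n) = 0
    · right
      rw [hue] at hu
      have hE : Y ^ m * Y⁻¹ ^ n = X ^ m * X⁻¹ ^ n := by
        have h2 : (X - Y)⁻¹ * (X ^ m * X⁻¹ ^ n - Y ^ m * Y⁻¹ ^ n) = 0 := by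
          linear_combination hu
        rcases mul_eq_zero.mp h2 with h | h
        · exact absurd h (inv_ne_zero hXY)
        · linear_combination -h
      have hvE : v (m + n) = X ^ m * X⁻¹ ^ n := by
        rw [hve]
        linear_combination (X * (X - Y)⁻¹) * hE
          + (X ^ m * X⁻¹ ^ n) * (mul_inv_cancel₀ hXY)
      intro hv1
      apply hXmn
      have h3 : X ^ m * (X ^ n)⁻¹ = 1 := by
        rw [← inv_pow]
        linear_combination hv1 - hvE
      exact (mul_inv_eq_one₀ (pow_ne_zero n hX)).mp h3
    · left; exact hu
  -- surjectivity of φ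
  have hsurj : Function.Surjective φ := by
    intro cc
    rcases hkey with h | h
    · refine ⟨(0, cc * (u (m + n))⁻¹), ?_⟩
      rw [hφ]
      field_simp
      ring
    · refine ⟨(cc * (v (m + n) - 1)⁻¹, 0), ?_⟩
      rw [hφ]
      field_simp
      ring
  -- injectivity of Λ
  have hinj : Function.Injective Λ := by
    intro x y hxy
    have h0 := congrFun hxy ⟨0, hz0⟩
    have h1 := congrFun hxy ⟨1, hz1⟩
    rw [hΛ, hΛ] at h0 h1
    simp only [Fin.val_mk] at h0 h1
    rw [hu0, hv0] at h0
    rw [hu1, hv1] at h1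
    simp only [mul_one, mul_zero, add_zero, zero_add] at h0 h1
    exact Prod.ext h0 h1
  refine ⟨(LinearMap.ker φ).map Λ, ?_, ?_⟩
  · -- set equality
    rw [Submodule.map_coe]
    ext γ
    simp only [Set.mem_image, SetLike.mem_coe, LinearMap.mem_ker, Set.mem_setOf_eq]
    constructor
    · rintro ⟨x, hx, rfl⟩ j hj0
      obtain ⟨jv, hjv⟩ := j
      simp only [Fin.val_mk] at hj0 ⊢
      have hφx : x.1 * (v (m + n) - 1) + x.2 * u (m + n) = 0 := by rw [← hφ]; exact hx
      have MEu' := MEu jv (by omega)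
      have MEv' := MEv jv (by omega)
      rcases eq_or_lt_of_le (show jv + 1 ≤ m + n by omega) with he | hlt
      · -- wrap-around equation
        rw [sum3 (Λ x) jv (by omega) hjv ⟨0, hz0⟩
          (show (0 : ℕ) = (jv + 1) % (m + n) by rw [he, Nat.mod_self])]
        simp only [hΛ, Fin.val_mk]
        rw [he] at MEu' MEv'
        rw [hu0, hv0]
        linear_combination x.1 * MEv' + x.2 * MEu'
          - (if jv < m then -(R * D⁻¹) else R * D) * hφx
      · rw [sum3 (Λ x) jv (by omega) hjv ⟨jv + 1, hlt⟩ ((Nat.mod_eq_of_lt hlt).symm)]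
        simp only [hΛ, Fin.val_mk]
        linear_combination x.1 * MEv' + x.2 * MEu'
    · intro hγ
      -- uniqueness: every solution is determined by its first two values
      have key : ∀ k, ∀ hk : k < m + n,
          γ ⟨k, hk⟩ = γ ⟨0, hz0⟩ * v k + γ ⟨1, hz1⟩ * u k := by
        intro k
        induction k using Nat.strong_induction_on with
        | _ k IH =>
          intro hk
          match k, hk with
          | 0, hk => rw [hu0, hv0]; ring_nf
          | 1, hk => rw [hu1, hv1]; ring_nf
          | (j + 2), hk =>
            have heq := hγ ⟨j + 1, by omega⟩ (by simp)
            simp only [Fin.val_mk] at heq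
            rw [sum3 γ (j + 1) (by omega) (by omega) ⟨j + 2, hk⟩
              ((Nat.mod_eq_of_lt (by omega)).symm)] at heq
            have MEu' := MEu (j + 1) (by omega)
            have MEv' := MEv (j + 1) (by omega)
            simp only [Nat.add_sub_cancel] at heq MEu' MEv'
            rw [IH j (by omega) (by omega), IH (j + 1) (by omega) (by omega)] at heq
            by_cases hb : j + 1 < m
            · have hsup : (if j + 1 < m then -(R * D⁻¹) else R * D) = -(R * D⁻¹) :=
                if_pos hb
              rw [hsup] at heq MEu' MEv'
              have hco : -(R * D⁻¹) ≠ 0 := by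
                simp only [neg_ne_zero]
                exact mul_ne_zero hR (inv_ne_zero hD)
              refine mul_left_cancel₀ hco ?_
              linear_combination heq - (γ ⟨0, hz0⟩) * MEv' - (γ ⟨1, hz1⟩) * MEu'
            · have hsup : (if j + 1 < m then -(R * D⁻¹) else R * D) = R * D :=
                if_neg hb
              rw [hsup] at heq MEu' MEv'
              have hco : R * D ≠ 0 := mul_ne_zero hR hD
              refine mul_left_cancel₀ hco ?_
              linear_combination heq - (γ ⟨0, hz0⟩) * MEv' - (γ ⟨1, hz1⟩) * MEu'
      refine ⟨(γ ⟨0, hz0⟩, γ ⟨1, hz1⟩), ?_, ?_⟩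
      · -- the functional vanishes: wrap-around equation
        rw [hφ]
        have heq := hγ ⟨m + n - 1, by omega⟩ (by simp; omega)
        simp only [Fin.val_mk] at heq
        rw [sum3 γ (m + n - 1) (by omega) (by omega) ⟨0, hz0⟩
          (show (0 : ℕ) = (m + n - 1 + 1) % (m + n)
            by rw [show m + n - 1 + 1 = m + n by omega, Nat.mod_self])] at heq
        have MEu' := MEu (m + n - 1) (by omega)
        have MEv' := MEv (m + n - 1) (by omega)
        have hjm : ¬ m + n - 1 < m := by omega
        have hsup : (if m + n - 1 < m then -(R * D⁻¹) else R * D) = R * D := if_neg hjm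
        rw [hsup, show m + n - 1 + 1 = m + n by omega] at MEu' MEv'
        rw [hsup] at heq
        rw [key (m + n - 1 - 1) (by omega), key (m + n - 1) (by omega),
          key 0 (by omega)] at heq
        rw [hu0, hv0] at heq
        have hRD : R * D ≠ 0 := mul_ne_zero hR hD
        have hcomb : (R * D) * ((γ ⟨0, hz0⟩) * (v (m + n) - 1)
            + (γ ⟨1, hz1⟩) * u (m + n)) = 0 := by
          linear_combination (γ ⟨0, hz0⟩) * MEv' + (γ ⟨1, hz1⟩) * MEu' - heq
        exact (mul_eq_zero.mp hcomb).resolve_left hRD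
      · -- Λ of the initial data reconstructs γ
        funext i
        obtain ⟨k, hk⟩ := i
        rw [hΛ]
        simp only [Fin.val_mk]
        exact (key k hk).symm
  · -- finrank
    have hker : Module.finrank ℂ (LinearMap.ker φ) = 1 := by
      have h1 := LinearMap.finrank_range_add_finrank_ker φ
      rw [LinearMap.range_eq_top.mpr hsurj, finrank_top, Module.finrank_self,
        Module.finrank_prod, Module.finrank_self] at h1
      omega
    rw [← hker]
    exact ((Submodule.equivMapOfInjective Λ hinj (LinearMap.ker φ)).finrank_eq).symm
end

section
/- Let m, n ≥ 1 with m ≠ n, let r be a nonzero integer, and let q ∈ ℂ be nonzero with q² ≠ 1 and q^{2r} ≠ 1. Then the vector (β_{0,r}, …, β_{m+n−1,r}) satisfies ∑_{i=0}^{m+n−1} β_{i,r} · [r·A_{i,j}] = 0 for every j ∈ {1, …, m+n−1}. -/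
/-- `β_{i,r} = (q^{(m-n-i)r} + q^{ir})/(q^r - q^{-r})` for `0 ≤ i ≤ m`, and
`β_{i,r} = (q^{(i-m-n)r} + q^{(2m-i)r})/(q^r - q^{-r})` for `m+1 ≤ i ≤ m+n-1`. -/
noncomputable def beta (m n : ℕ) (q : ℂ) (r : ℤ) (i : ℕ) : ℂ :=
  if i ≤ m then
    (q ^ (((m : ℤ) - n - i) * r) + q ^ ((i : ℤ) * r)) / (q ^ r - q ^ (-r))
  else
    (q ^ (((i : ℤ) - m - n) * r) + q ^ ((2 * (m : ℤ) - i) * r)) / (q ^ r - q ^ (-r))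

lemma cartanA_eval (m n i j : ℕ) (hi : i < m + n) (hj : j < m + n) :
    cartanA m n i j =
      if i = j then (if i = 0 ∨ i = m then 0 else if i < m then 2 else -2)
      else if j = (i + 1) % (m + n) then (if i < m then -1 else 1)
      else if i = (j + 1) % (m + n) then (if j < m then -1 else 1)
      else 0 := by
  simp only [cartanA, Nat.mod_eq_of_lt hi, Nat.mod_eq_of_lt hj]

lemma beta_le (m n : ℕ) (q : ℂ) (r : ℤ) (i : ℕ) (h : i ≤ m) :
    beta m n q r i
      = (q ^ (((m : ℤ) - n - i) * r) + q ^ ((i : ℤ) * r)) / (q ^ r - q ^ (-r)) :=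
  if_pos h

lemma beta_ge (m n : ℕ) (q : ℂ) (r : ℤ) (i : ℕ) (h : m ≤ i) :
    beta m n q r i
      = (q ^ (((i : ℤ) - m - n) * r) + q ^ ((2 * (m : ℤ) - i) * r)) / (q ^ r - q ^ (-r)) := by
  unfold beta
  split
  · have him : i = m := le_antisymm ‹_› h
    subst him
    congr 2
    · congr 1
      ring
    · congr 1
      ring
  · rfl


lemma key1 (u A B D2 : ℂ) (hu : u ≠ 0) :
    (A * u + B * u⁻¹) / (u - u⁻¹) * ((u⁻¹ - u) / D2)
      + (A + B) / (u - u⁻¹) * ((u * u - u⁻¹ * u⁻¹) / D2)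
      + (A * u⁻¹ + B * u) / (u - u⁻¹) * ((u⁻¹ - u) / D2) = 0 := by
  rw [div_mul_div_comm, div_mul_div_comm, div_mul_div_comm, ← add_div,
    ← add_div, div_eq_zero_iff]
  left
  field_simp
  ring

lemma key2 (u A B D2 : ℂ) (hu : u ≠ 0) :
    (A * u⁻¹ + B * u) / (u - u⁻¹) * ((u - u⁻¹) / D2)
      + (A + B) / (u - u⁻¹) * ((u⁻¹ * u⁻¹ - u * u) / D2)
      + (A * u + B * u⁻¹) / (u - u⁻¹) * ((u - u⁻¹) / D2) = 0 := by
  rw [div_mul_div_comm, div_mul_div_comm, div_mul_div_comm, ← add_div,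
    ← add_div, div_eq_zero_iff]
  left
  field_simp
  ring

lemma key3 (u C D2 : ℂ) (hu : u ≠ 0) :
    (u⁻¹ * u⁻¹ + C * u * u) / (u - u⁻¹) * ((u - u⁻¹) / D2)
      + (u⁻¹ + C * u) / (u - u⁻¹) * ((u⁻¹ * u⁻¹ - u * u) / D2)
      + (C + 1) / (u - u⁻¹) * ((u - u⁻¹) / D2) = 0 := by
  rw [div_mul_div_comm, div_mul_div_comm, div_mul_div_comm, ← add_div,
    ← add_div, div_eq_zero_iff]
  left
  field_simp
  ring

/-- The vector `(β_{0,r}, …, β_{m+n-1,r})` satisfies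
`∑_{i=0}^{m+n-1} β_{i,r} [r A_{i,j}] = 0` for every `j ∈ {1, …, m+n-1}`. -/
theorem beta_solves_system (m n : ℕ) (hm : 1 ≤ m) (hn : 1 ≤ n) (hmn : m ≠ n)
    (r : ℤ) (hr : r ≠ 0) (q : ℂ) (hq : q ≠ 0) (hq2 : q ^ 2 ≠ 1)
    (hq2r : q ^ (2 * r) ≠ 1) :
    ∀ j : Fin (m + n), j.val ≠ 0 →
      ∑ i : Fin (m + n), beta m n q r i.val * qint q (r * cartanA m n i.val j.val) = 0 := by
  intro j hj0
  have hjN : (j : ℕ) < m + n := j.isLt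
  have hj1 : 1 ≤ (j : ℕ) := Nat.one_le_iff_ne_zero.2 hj0
  have hN3 : 3 ≤ m + n := by omega
  -- denominators are nonzero
  have hD2 : q - q⁻¹ ≠ 0 := by
    intro h
    apply hq2
    have h' := sub_eq_zero.mp h
    rw [sq]
    nth_rewrite 2 [h']
    exact mul_inv_cancel₀ hq
  have hu : q ^ r ≠ 0 := zpow_ne_zero r hq
  have hD1 : q ^ r - q ^ (-r) ≠ 0 := by
    intro h
    apply hq2r
    have h' := sub_eq_zero.mp h
    rw [two_mul, zpow_add₀ hq]
    nth_rewrite 2 [h']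
    rw [← zpow_add₀ hq, add_neg_cancel, zpow_zero]
  have huD : q ^ r - (q ^ r)⁻¹ ≠ 0 := by rwa [zpow_neg] at hD1
  -- the three relevant indices
  have hp_lt : (j : ℕ) - 1 < m + n := by omega
  set p : Fin (m + n) := ⟨(j : ℕ) - 1, hp_lt⟩ with hp_def
  have hs_lt : ((j : ℕ) + 1) % (m + n) < m + n := Nat.mod_lt _ (by omega)
  set s : Fin (m + n) := ⟨((j : ℕ) + 1) % (m + n), hs_lt⟩ with hs_def
  have hpv : (p : ℕ) = (j : ℕ) - 1 := rfl
  have hsv0 : (s : ℕ) = ((j : ℕ) + 1) % (m + n) := rfl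
  have hs_cases : ((s : ℕ) = (j : ℕ) + 1 ∧ (j : ℕ) + 1 < m + n)
      ∨ ((s : ℕ) = 0 ∧ (j : ℕ) = m + n - 1) := by
    rcases Nat.lt_or_ge ((j : ℕ) + 1) (m + n) with hw | hw
    · left; exact ⟨by rw [hsv0, Nat.mod_eq_of_lt hw], hw⟩
    · right
      have : (j : ℕ) + 1 = m + n := by omega
      constructor
      · rw [hsv0, this, Nat.mod_self]
      · omega
  have hpj : p ≠ j := Fin.ne_of_val_ne (by omega)
  have hps : p ≠ s := Fin.ne_of_val_ne (by rcases hs_cases with ⟨h1, h2⟩ | ⟨h1, h2⟩ <;> omega)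
  have hjs : j ≠ s := Fin.ne_of_val_ne (by rcases hs_cases with ⟨h1, h2⟩ | ⟨h1, h2⟩ <;> omega)
  have hsum : ∑ i : Fin (m + n), beta m n q r i.val * qint q (r * cartanA m n i.val j.val)
      = beta m n q r p.val * qint q (r * cartanA m n p.val j.val)
      + beta m n q r j.val * qint q (r * cartanA m n j.val j.val)
      + beta m n q r s.val * qint q (r * cartanA m n s.val j.val) := by
    rw [← Finset.sum_subset (Finset.subset_univ ({p, j, s} : Finset (Fin (m + n))))]
    · rw [Finset.sum_insert (by simp [hpj, hps]),
        Finset.sum_insert (by simp [hjs]), Finset.sum_singleton, add_assoc]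
    · intro i _ hi
      simp only [Finset.mem_insert, Finset.mem_singleton, not_or] at hi
      obtain ⟨hip, hij, his⟩ := hi
      have h1 : i.val ≠ j.val := fun h => hij (Fin.ext h)
      have h2 : i.val ≠ ((j : ℕ) + 1) % (m + n) := fun h => his (Fin.ext (by rw [h, hsv0]))
      have hip' : i.val ≠ (j : ℕ) - 1 := fun h => hip (Fin.ext (by rw [h, hpv]))
      have h3 : j.val ≠ (i.val + 1) % (m + n) := by
        intro h
        rcases Nat.lt_or_ge (i.val + 1) (m + n) with hw | hw
        · rw [Nat.mod_eq_of_lt hw] at h; omega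
        · have hiN : i.val < m + n := i.isLt
          have : i.val + 1 = m + n := by omega
          rw [this, Nat.mod_self] at h; omega
      rw [cartanA_eval m n i.val j.val i.isLt hjN, if_neg h1, if_neg h3, if_neg h2]
      simp [qint]
  rw [hsum]
  by_cases hcA : (j : ℕ) < m
  · -- Case A : 1 ≤ j < m
    have hsv : (s : ℕ) = (j : ℕ) + 1 := by
      rcases hs_cases with ⟨h1, _⟩ | ⟨_, h2⟩
      · exact h1
      · omega
    rw [hpv, hsv]
    have hA1 : cartanA m n ((j : ℕ) - 1) (j : ℕ) = -1 := by
      rw [cartanA_eval m n _ _ (by omega) hjN,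
        if_neg (show ¬ ((j : ℕ) - 1 = (j : ℕ)) by omega),
        if_pos (show (j : ℕ) = ((j : ℕ) - 1 + 1) % (m + n) by
          rw [Nat.mod_eq_of_lt (by omega)]; omega),
        if_pos (show (j : ℕ) - 1 < m by omega)]
    have hA2 : cartanA m n (j : ℕ) (j : ℕ) = 2 := by
      rw [cartanA_eval m n _ _ hjN hjN, if_pos rfl,
        if_neg (show ¬ ((j : ℕ) = 0 ∨ (j : ℕ) = m) by omega),
        if_pos hcA]
    have hA3 : cartanA m n ((j : ℕ) + 1) (j : ℕ) = -1 := by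
      rw [cartanA_eval m n _ _ (by omega) hjN,
        if_neg (show ¬ ((j : ℕ) + 1 = (j : ℕ)) by omega),
        if_neg (show ¬ ((j : ℕ) = ((j : ℕ) + 1 + 1) % (m + n)) by
          rcases Nat.lt_or_ge ((j : ℕ) + 2) (m + n) with hw | hw
          · rw [Nat.mod_eq_of_lt (by omega)]; omega
          · have h2 : (j : ℕ) + 2 = m + n := by omega
            rw [show (j : ℕ) + 1 + 1 = m + n from h2, Nat.mod_self]; omega),
        if_pos (show (j : ℕ) + 1 = ((j : ℕ) + 1) % (m + n) by
          rw [Nat.mod_eq_of_lt (by omega)]),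
        if_pos hcA]
    have hqm1 : qint q (r * (-1)) = ((q ^ r)⁻¹ - q ^ r) / (q - q⁻¹) := by
      rw [show r * (-1 : ℤ) = -r by ring]
      unfold qint
      rw [neg_neg, zpow_neg]
    have hqp2 : qint q (r * 2) = (q ^ r * q ^ r - (q ^ r)⁻¹ * (q ^ r)⁻¹) / (q - q⁻¹) := by
      unfold qint
      rw [show r * (2 : ℤ) = r + r by ring, neg_add, zpow_add₀ hq, zpow_add₀ hq, zpow_neg]
    have hb2 : beta m n q r j.val
        = (q ^ (((m : ℤ) - n - (j : ℕ)) * r) + q ^ (((j : ℕ) : ℤ) * r))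
          / (q ^ r - (q ^ r)⁻¹) := by
      rw [beta_le m n q r j.val (by omega), zpow_neg]
    have hb1 : beta m n q r ((j : ℕ) - 1)
        = (q ^ (((m : ℤ) - n - (j : ℕ)) * r) * q ^ r
            + q ^ (((j : ℕ) : ℤ) * r) * (q ^ r)⁻¹) / (q ^ r - (q ^ r)⁻¹) := by
      rw [beta_le m n q r _ (by omega),
        show ((m : ℤ) - n - (((j : ℕ) - 1 : ℕ) : ℤ)) * r = ((m : ℤ) - n - (j : ℕ)) * r + r by
          rw [Nat.cast_sub hj1]; push_cast; ring,
        show ((((j : ℕ) - 1 : ℕ)) : ℤ) * r = ((j : ℕ) : ℤ) * r + (-r) by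
          rw [Nat.cast_sub hj1]; push_cast; ring,
        zpow_add₀ hq, zpow_add₀ hq, zpow_neg]
    have hb3 : beta m n q r ((j : ℕ) + 1)
        = (q ^ (((m : ℤ) - n - (j : ℕ)) * r) * (q ^ r)⁻¹
            + q ^ (((j : ℕ) : ℤ) * r) * q ^ r) / (q ^ r - (q ^ r)⁻¹) := by
      rw [beta_le m n q r _ (by omega),
        show ((m : ℤ) - n - (((j : ℕ) + 1 : ℕ) : ℤ)) * r
            = ((m : ℤ) - n - (j : ℕ)) * r + (-r) by push_cast; ring,
        show ((((j : ℕ) + 1 : ℕ)) : ℤ) * r = ((j : ℕ) : ℤ) * r + r by push_cast; ring,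
        zpow_add₀ hq, zpow_add₀ hq, zpow_neg]
    rw [hA1, hA2, hA3, hb1, hb2, hb3, hqm1, hqp2]
    exact key1 (q ^ r) _ _ _ hu
  · by_cases hcB : (j : ℕ) = m
    · -- Case B : j = m
      rw [hpv]
      have hjm : ((j : ℕ) : ℤ) = (m : ℤ) := by exact_mod_cast hcB
      have hA1 : cartanA m n ((j : ℕ) - 1) (j : ℕ) = -1 := by
        rw [cartanA_eval m n _ _ (by omega) hjN,
          if_neg (show ¬ ((j : ℕ) - 1 = (j : ℕ)) by omega),
          if_pos (show (j : ℕ) = ((j : ℕ) - 1 + 1) % (m + n) by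
            rw [Nat.mod_eq_of_lt (by omega)]; omega),
          if_pos (show (j : ℕ) - 1 < m by omega)]
      have hA2 : cartanA m n (j : ℕ) (j : ℕ) = 0 := by
        rw [cartanA_eval m n _ _ hjN hjN, if_pos rfl, if_pos (Or.inr hcB)]
      have hqm1 : qint q (r * (-1)) = ((q ^ r)⁻¹ - q ^ r) / (q - q⁻¹) := by
        rw [show r * (-1 : ℤ) = -r by ring]
        unfold qint
        rw [neg_neg, zpow_neg]
      have hq0 : qint q (r * 0) = 0 := by simp [qint]
      have hqp1 : qint q (r * 1) = (q ^ r - (q ^ r)⁻¹) / (q - q⁻¹) := by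
        rw [mul_one]
        unfold qint
        rw [zpow_neg]
      rcases hs_cases with ⟨hsv, hlt⟩ | ⟨hsv, hjtop⟩
      · rw [hsv]
        have hA3 : cartanA m n ((j : ℕ) + 1) (j : ℕ) = 1 := by
          rw [cartanA_eval m n _ _ (by omega) hjN,
            if_neg (show ¬ ((j : ℕ) + 1 = (j : ℕ)) by omega),
            if_neg (show ¬ ((j : ℕ) = ((j : ℕ) + 1 + 1) % (m + n)) by
              rcases Nat.lt_or_ge ((j : ℕ) + 2) (m + n) with hw | hw
              · rw [Nat.mod_eq_of_lt (by omega)]; omega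
              · have h2 : (j : ℕ) + 1 + 1 = m + n := by omega
                rw [h2, Nat.mod_self]; omega),
            if_pos (show (j : ℕ) + 1 = ((j : ℕ) + 1) % (m + n) by
              rw [Nat.mod_eq_of_lt (by omega)]),
            if_neg (show ¬ ((j : ℕ) < m) by omega)]
        have hXX : beta m n q r ((j : ℕ) + 1) = beta m n q r ((j : ℕ) - 1) := by
          rw [beta_ge m n q r _ (by omega), beta_le m n q r _ (by omega),
            show (((((j : ℕ) + 1 : ℕ)) : ℤ) - m - n) * r
                = ((m : ℤ) - n - (((j : ℕ) - 1 : ℕ) : ℤ)) * r by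
              rw [Nat.cast_sub hj1]; push_cast; linear_combination (2 * r) * hjm,
            show (2 * (m : ℤ) - (((j : ℕ) + 1 : ℕ) : ℤ)) * r
                = ((((j : ℕ) - 1 : ℕ)) : ℤ) * r by
              rw [Nat.cast_sub hj1]; push_cast; linear_combination (-2 * r) * hjm]
        rw [hA1, hA2, hA3, hXX, hqm1, hq0, hqp1]
        ring
      · rw [hsv]
        have hn1 : ((n : ℕ) : ℤ) = 1 := by
          have : n = 1 := by omega
          exact_mod_cast this
        have hA3 : cartanA m n 0 (j : ℕ) = 1 := by
          rw [cartanA_eval m n _ _ (by omega) hjN,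
            if_neg (show ¬ ((0 : ℕ) = (j : ℕ)) by omega),
            if_neg (show ¬ ((j : ℕ) = (0 + 1) % (m + n)) by
              rw [Nat.mod_eq_of_lt (by omega)]; omega),
            if_pos (show (0 : ℕ) = ((j : ℕ) + 1) % (m + n) by
              rw [show (j : ℕ) + 1 = m + n by omega, Nat.mod_self]),
            if_neg (show ¬ ((j : ℕ) < m) by omega)]
        have hXX : beta m n q r 0 = beta m n q r ((j : ℕ) - 1) := by
          rw [beta_le m n q r 0 (by omega), beta_le m n q r _ (by omega),
            show ((m : ℤ) - n - ((0 : ℕ) : ℤ)) * r = ((((j : ℕ) - 1 : ℕ)) : ℤ) * r by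
              rw [Nat.cast_sub hj1]; push_cast; linear_combination (-r) * hjm + (-r) * hn1,
            show (((0 : ℕ) : ℤ)) * r = ((m : ℤ) - n - (((j : ℕ) - 1 : ℕ) : ℤ)) * r by
              rw [Nat.cast_sub hj1]; push_cast; linear_combination r * hjm + r * hn1]
          ring
        rw [hA1, hA2, hA3, hXX, hqm1, hq0, hqp1]
        ring
    · -- m < j
      have hmj : m < (j : ℕ) := by omega
      by_cases hcD : (j : ℕ) = m + n - 1
      · -- Case D : j = m + n - 1, m < j (so n ≥ 2)
        have hsv : (s : ℕ) = 0 := by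
          rcases hs_cases with ⟨_, h2⟩ | ⟨h1, _⟩
          · omega
          · exact h1
        rw [hpv, hsv]
        have hjZ : (((j : ℕ)) : ℤ) = (m : ℤ) + n - 1 := by
          have : (j : ℕ) = m + n - 1 := hcD
          omega
        have hA1 : cartanA m n ((j : ℕ) - 1) (j : ℕ) = 1 := by
          rw [cartanA_eval m n _ _ (by omega) hjN,
            if_neg (show ¬ ((j : ℕ) - 1 = (j : ℕ)) by omega),
            if_pos (show (j : ℕ) = ((j : ℕ) - 1 + 1) % (m + n) by
              rw [Nat.mod_eq_of_lt (by omega)]; omega),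
            if_neg (show ¬ ((j : ℕ) - 1 < m) by omega)]
        have hA2 : cartanA m n (j : ℕ) (j : ℕ) = -2 := by
          rw [cartanA_eval m n _ _ hjN hjN, if_pos rfl,
            if_neg (show ¬ ((j : ℕ) = 0 ∨ (j : ℕ) = m) by omega),
            if_neg (show ¬ ((j : ℕ) < m) by omega)]
        have hA3 : cartanA m n 0 (j : ℕ) = 1 := by
          rw [cartanA_eval m n _ _ (by omega) hjN,
            if_neg (show ¬ ((0 : ℕ) = (j : ℕ)) by omega),
            if_neg (show ¬ ((j : ℕ) = (0 + 1) % (m + n)) by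
              rw [Nat.mod_eq_of_lt (by omega)]; omega),
            if_pos (show (0 : ℕ) = ((j : ℕ) + 1) % (m + n) by
              rw [show (j : ℕ) + 1 = m + n by omega, Nat.mod_self]),
            if_neg (show ¬ ((j : ℕ) < m) by omega)]
        have hqp1 : qint q (r * 1) = (q ^ r - (q ^ r)⁻¹) / (q - q⁻¹) := by
          rw [mul_one]
          unfold qint
          rw [zpow_neg]
        have hqm2 : qint q (r * (-2))
            = ((q ^ r)⁻¹ * (q ^ r)⁻¹ - q ^ r * q ^ r) / (q - q⁻¹) := by
          rw [show r * (-2 : ℤ) = -r + -r by ring]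
          unfold qint
          rw [neg_add, neg_neg, zpow_add₀ hq, zpow_add₀ hq, zpow_neg]
        have hb1 : beta m n q r ((j : ℕ) - 1)
            = ((q ^ r)⁻¹ * (q ^ r)⁻¹
                + q ^ (((m : ℤ) - n) * r) * q ^ r * q ^ r) / (q ^ r - (q ^ r)⁻¹) := by
          rw [beta_ge m n q r _ (by omega),
            show (((((j : ℕ) - 1 : ℕ)) : ℤ) - m - n) * r = -r + -r by
              rw [Nat.cast_sub hj1, hjZ]; ring,
            show (2 * (m : ℤ) - (((j : ℕ) - 1 : ℕ) : ℤ)) * r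
                = ((m : ℤ) - n) * r + r + r by
              rw [Nat.cast_sub hj1, hjZ]; ring,
            zpow_add₀ hq, zpow_add₀ hq, zpow_add₀ hq, zpow_neg]
        have hb2 : beta m n q r (j : ℕ)
            = ((q ^ r)⁻¹ + q ^ (((m : ℤ) - n) * r) * q ^ r) / (q ^ r - (q ^ r)⁻¹) := by
          rw [beta_ge m n q r _ (by omega),
            show ((((j : ℕ)) : ℤ) - m - n) * r = -r by rw [hjZ]; ring,
            show (2 * (m : ℤ) - ((j : ℕ) : ℤ)) * r = ((m : ℤ) - n) * r + r by
              rw [hjZ]; ring,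
            zpow_add₀ hq, zpow_neg]
        have hb3 : beta m n q r 0
            = (q ^ (((m : ℤ) - n) * r) + 1) / (q ^ r - (q ^ r)⁻¹) := by
          rw [beta_le m n q r 0 (by omega),
            show ((m : ℤ) - n - ((0 : ℕ) : ℤ)) * r = ((m : ℤ) - n) * r by push_cast; ring,
            show (((0 : ℕ) : ℤ)) * r = 0 by push_cast; ring,
            zpow_zero, zpow_neg]
        rw [hA1, hA2, hA3, hb1, hb2, hb3, hqp1, hqm2]
        exact key3 (q ^ r) _ _ hu
      · -- Case C : m < j < m + n - 1
        have hsv : (s : ℕ) = (j : ℕ) + 1 := by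
          rcases hs_cases with ⟨h1, _⟩ | ⟨_, h2⟩
          · exact h1
          · omega
        rw [hpv, hsv]
        have hA1 : cartanA m n ((j : ℕ) - 1) (j : ℕ) = 1 := by
          rw [cartanA_eval m n _ _ (by omega) hjN,
            if_neg (show ¬ ((j : ℕ) - 1 = (j : ℕ)) by omega),
            if_pos (show (j : ℕ) = ((j : ℕ) - 1 + 1) % (m + n) by
              rw [Nat.mod_eq_of_lt (by omega)]; omega),
            if_neg (show ¬ ((j : ℕ) - 1 < m) by omega)]
        have hA2 : cartanA m n (j : ℕ) (j : ℕ) = -2 := by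
          rw [cartanA_eval m n _ _ hjN hjN, if_pos rfl,
            if_neg (show ¬ ((j : ℕ) = 0 ∨ (j : ℕ) = m) by omega),
            if_neg (show ¬ ((j : ℕ) < m) by omega)]
        have hA3 : cartanA m n ((j : ℕ) + 1) (j : ℕ) = 1 := by
          rw [cartanA_eval m n _ _ (by omega) hjN,
            if_neg (show ¬ ((j : ℕ) + 1 = (j : ℕ)) by omega),
            if_neg (show ¬ ((j : ℕ) = ((j : ℕ) + 1 + 1) % (m + n)) by
              rcases Nat.lt_or_ge ((j : ℕ) + 2) (m + n) with hw | hw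
              · rw [Nat.mod_eq_of_lt (by omega)]; omega
              · have h2 : (j : ℕ) + 1 + 1 = m + n := by omega
                rw [h2, Nat.mod_self]; omega),
            if_pos (show (j : ℕ) + 1 = ((j : ℕ) + 1) % (m + n) by
              rw [Nat.mod_eq_of_lt (by omega)]),
            if_neg (show ¬ ((j : ℕ) < m) by omega)]
        have hqp1 : qint q (r * 1) = (q ^ r - (q ^ r)⁻¹) / (q - q⁻¹) := by
          rw [mul_one]
          unfold qint
          rw [zpow_neg]
        have hqm2 : qint q (r * (-2))
            = ((q ^ r)⁻¹ * (q ^ r)⁻¹ - q ^ r * q ^ r) / (q - q⁻¹) := by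
          rw [show r * (-2 : ℤ) = -r + -r by ring]
          unfold qint
          rw [neg_add, neg_neg, zpow_add₀ hq, zpow_add₀ hq, zpow_neg]
        have hb1 : beta m n q r ((j : ℕ) - 1)
            = (q ^ ((((j : ℕ) : ℤ) - m - n) * r) * (q ^ r)⁻¹
                + q ^ ((2 * (m : ℤ) - (j : ℕ)) * r) * q ^ r) / (q ^ r - (q ^ r)⁻¹) := by
          rw [beta_ge m n q r _ (by omega),
            show (((((j : ℕ) - 1 : ℕ)) : ℤ) - m - n) * r
                = (((j : ℕ) : ℤ) - m - n) * r + (-r) by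
              rw [Nat.cast_sub hj1]; push_cast; ring,
            show (2 * (m : ℤ) - (((j : ℕ) - 1 : ℕ) : ℤ)) * r
                = (2 * (m : ℤ) - (j : ℕ)) * r + r by
              rw [Nat.cast_sub hj1]; push_cast; ring,
            zpow_add₀ hq, zpow_add₀ hq, zpow_neg]
        have hb2 : beta m n q r (j : ℕ)
            = (q ^ ((((j : ℕ) : ℤ) - m - n) * r)
                + q ^ ((2 * (m : ℤ) - (j : ℕ)) * r)) / (q ^ r - (q ^ r)⁻¹) := by
          rw [beta_ge m n q r _ (by omega), zpow_neg]
        have hb3 : beta m n q r ((j : ℕ) + 1)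
            = (q ^ ((((j : ℕ) : ℤ) - m - n) * r) * q ^ r
                + q ^ ((2 * (m : ℤ) - (j : ℕ)) * r) * (q ^ r)⁻¹) / (q ^ r - (q ^ r)⁻¹) := by
          rw [beta_ge m n q r _ (by omega),
            show (((((j : ℕ) + 1 : ℕ)) : ℤ) - m - n) * r
                = (((j : ℕ) : ℤ) - m - n) * r + r by push_cast; ring,
            show (2 * (m : ℤ) - (((j : ℕ) + 1 : ℕ) : ℤ)) * r
                = (2 * (m : ℤ) - (j : ℕ)) * r + (-r) by push_cast; ring,
            zpow_add₀ hq, zpow_add₀ hq, zpow_neg]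
        rw [hA1, hA2, hA3, hb1, hb2, hb3, hqp1, hqm2]
        exact key2 (q ^ r) _ _ _ hu
end

section
/- Let d, q ∈ ℂ be nonzero and set [2] = q + q^{−1}. Then in the field ℂ(z₁, z₂, w₁, w₂) of rational functions in four independent variables, the following sum of ten rational functions vanishes identically: 1 − (dz₁−q^{−1}w₂)(dz₁−qw₁)/((dq^{−1}z₁−w₂)(dqz₁−w₁)) + (dz₂−q^{−1}w₂)(dqz₂−w₁)/((dz₂−qw₁)(dq^{−1}z₂−w₂)) + (dz₂−q^{−1}w₂)(dz₁−qw₁)/((dq^{−1}z₂−w₂)(dqz₁−w₁)) + (dz₂−q^{−1}w₂)(dz₁−q^{−1}w₂)/((dq^{−1}z₂−w₂)(dq^{−1}z₁−w₂)) − (dz₁−q^{−1}w₂)(dz₁−qw₁)(dqz₂−w₁)(dz₂−q^{−1}w₂)/((dq^{−1}z₁−w₂)(dqz₁−w₁)(dz₂−qw₁)(dq^{−1}z₂−w₂)) − (dz₁−q^{−1}w₂)(dz₁−qw₁)(dqz₂−w₁)/((dqz₁−w₁)(dz₂−qw₁)(dz₁−q^{−1}w₂)) − (dz₁−q^{−1}w₂)(dqz₂−w₁)(dqz₁−w₁)/((dq^{−1}z₁−w₂)(dqz₁−w₁)(dz₂−qw₁))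 − [2]·(dz₂−q^{−1}w₂)/(dq^{−1}z₂−w₂) + [2]·(dz₁−q^{−1}w₂)(dz₁−qw₁)(dqz₂−w₁)/((dq^{−1}z₁−w₂)(dqz₁−w₁)(dz₂−qw₁)) = 0. -/
/-- The field `ℂ(z₁, z₂, w₁, w₂)` of rational functions in four independent
variables over `ℂ`. -/
abbrev RatFuncField : Type := FractionRing (MvPolynomial (Fin 4) ℂ)

/-- A complex constant viewed inside `ℂ(z₁, z₂, w₁, w₂)`. -/
noncomputable def cconst (a : ℂ) : RatFuncField :=
  algebraMap (MvPolynomial (Fin 4) ℂ) RatFuncField (MvPolynomial.C a)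

/-- The variables `z₁, z₂, w₁, w₂` viewed inside `ℂ(z₁, z₂, w₁, w₂)`. -/
noncomputable def rvar (i : Fin 4) : RatFuncField :=
  algebraMap (MvPolynomial (Fin 4) ℂ) RatFuncField (MvPolynomial.X i)


lemma cconst_injective : Function.Injective cconst := by
  intro a b h
  have := (IsFractionRing.injective (MvPolynomial (Fin 4) ℂ) RatFuncField) h
  exact MvPolynomial.C_injective _ _ this

lemma cconst_ne_zero {a : ℂ} (ha : a ≠ 0) : cconst a ≠ 0 := by
  intro h
  exact ha (cconst_injective (by simpa [cconst, map_zero] using h))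

lemma cconst_mul (a b : ℂ) : cconst (a * b) = cconst a * cconst b := by
  simp [cconst, map_mul]

lemma cconst_one : cconst 1 = 1 := by simp [cconst]

lemma denom_ne_zero {a b : ℂ} (hb : b ≠ 0) {i j : Fin 4} (hij : i ≠ j) :
    cconst a * rvar i - cconst b * rvar j ≠ 0 := by
  intro h
  have h2 : algebraMap (MvPolynomial (Fin 4) ℂ) RatFuncField
      (MvPolynomial.C a * MvPolynomial.X i - MvPolynomial.C b * MvPolynomial.X j) = 0 := by
    simpa [cconst, rvar, map_sub, map_mul] using h
  have h3 : (MvPolynomial.C a * MvPolynomial.X i - MvPolynomial.C b * MvPolynomial.X j :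
      MvPolynomial (Fin 4) ℂ) = 0 := by
    apply IsFractionRing.injective (MvPolynomial (Fin 4) ℂ) RatFuncField
    simpa using h2
  have h4 := congrArg (MvPolynomial.eval (fun k => if k = j then (1:ℂ) else 0)) h3
  simp [MvPolynomial.eval_X, hij, hb] at h4

lemma denom_ne_zero' {a : ℂ} (ha : a ≠ 0) {i j : Fin 4} (hij : i ≠ j) :
    cconst a * rvar i - rvar j ≠ 0 := by
  have := denom_ne_zero (a := a) (b := 1) one_ne_zero hij
  simpa [cconst_one] using this

set_option maxHeartbeats 1000000 in
lemma serre_core {K : Type*} [Field K] (D Q qi z1 z2 w1 w2 : K) (hqi : Q * qi = 1)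
    (g1 : D * z1 - Q * w2 ≠ 0) (g2 : D * Q * z1 - w1 ≠ 0)
    (g3 : D * z2 - Q * w1 ≠ 0) (g4 : D * z2 - Q * w2 ≠ 0)
    (g5 : D * Q * z1 - w2 ≠ 0) :
    (1 : K)
    - (D * z1 - qi * w2) * (D * z1 - Q * w1) /
        ((D * qi * z1 - w2) * (D * Q * z1 - w1))
    + (D * z2 - qi * w2) * (D * Q * z2 - w1) /
        ((D * z2 - Q * w1) * (D * qi * z2 - w2))
    + (D * z2 - qi * w2) * (D * z1 - Q * w1) /
        ((D * qi * z2 - w2) * (D * Q * z1 - w1))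
    + (D * z2 - qi * w2) * (D * z1 - qi * w2) /
        ((D * qi * z2 - w2) * (D * qi * z1 - w2))
    - (D * z1 - qi * w2) * (D * z1 - Q * w1) * (D * Q * z2 - w1) * (D * z2 - qi * w2) /
        ((D * qi * z1 - w2) * (D * Q * z1 - w1) * (D * z2 - Q * w1) * (D * qi * z2 - w2))
    - (D * z1 - qi * w2) * (D * z1 - Q * w1) * (D * Q * z2 - w1) /
        ((D * Q * z1 - w1) * (D * z2 - Q * w1) * (D * z1 - qi * w2))
    - (D * z1 - qi * w2) * (D * Q * z2 - w1) * (D * Q * z1 - w1) /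
        ((D * qi * z1 - w2) * (D * Q * z1 - w1) * (D * z2 - Q * w1))
    - (Q + qi) * (D * z2 - qi * w2) / (D * qi * z2 - w2)
    + (Q + qi) * ((D * z1 - qi * w2) * (D * z1 - Q * w1) * (D * Q * z2 - w1)) /
        ((D * qi * z1 - w2) * (D * Q * z1 - w1) * (D * z2 - Q * w1))
    = 0 := by
  have hqi0 : qi ≠ 0 := right_ne_zero_of_mul_eq_one hqi
  have r1 : D * z1 - qi * w2 = qi * (D * Q * z1 - w2) := by
    linear_combination (-(D * z1)) * hqi
  have r2 : D * qi * z1 - w2 = qi * (D * z1 - Q * w2) := by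
    linear_combination w2 * hqi
  have r3 : D * z2 - qi * w2 = qi * (D * Q * z2 - w2) := by
    linear_combination (-(D * z2)) * hqi
  have r4 : D * qi * z2 - w2 = qi * (D * z2 - Q * w2) := by
    linear_combination w2 * hqi
  have r5 : Q + qi = qi * (Q * Q + 1) := by
    linear_combination (-Q) * hqi
  have hM : (D * z1 - Q * w2) * (D * Q * z1 - w1) * (D * z2 - Q * w2) * (D * z2 - Q * w1) * (qi * qi) ≠ 0 :=
    mul_ne_zero (mul_ne_zero (mul_ne_zero (mul_ne_zero g1 g2) g4) g3)
      (mul_ne_zero hqi0 hqi0)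
  have e2 : (D * z1 - qi * w2) * (D * z1 - Q * w1) /
      ((D * qi * z1 - w2) * (D * Q * z1 - w1))
      = ((D * Q * z1 - w2) * (D * z1 - Q * w1) * (D * z2 - Q * w2) * (D * z2 - Q * w1) * (qi * qi)) / ((D * z1 - Q * w2) * (D * Q * z1 - w1) * (D * z2 - Q * w2) * (D * z2 - Q * w1) * (qi * qi)) := by
    rw [r1, r2]
    rw [div_eq_div_iff (mul_ne_zero (mul_ne_zero hqi0 g1) g2) hM]
    ring
  have e3 : (D * z2 - qi * w2) * (D * Q * z2 - w1) /
      ((D * z2 - Q * w1) * (D * qi * z2 - w2))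
      = ((D * Q * z2 - w2) * (D * Q * z2 - w1) * (D * z1 - Q * w2) * (D * Q * z1 - w1) * (qi * qi)) / ((D * z1 - Q * w2) * (D * Q * z1 - w1) * (D * z2 - Q * w2) * (D * z2 - Q * w1) * (qi * qi)) := by
    rw [r3, r4]
    rw [div_eq_div_iff (mul_ne_zero g3 (mul_ne_zero hqi0 g4)) hM]
    ring
  have e4 : (D * z2 - qi * w2) * (D * z1 - Q * w1) /
      ((D * qi * z2 - w2) * (D * Q * z1 - w1))
      = ((D * Q * z2 - w2) * (D * z1 - Q * w1) * (D * z1 - Q * w2) * (D * z2 - Q * w1) * (qi * qi)) / ((D * z1 - Q * w2) * (D * Q * z1 - w1) * (D * z2 - Q * w2) * (D * z2 - Q * w1) * (qi * qi)) := by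
    rw [r3, r4]
    rw [div_eq_div_iff (mul_ne_zero (mul_ne_zero hqi0 g4) g2) hM]
    ring
  have e5 : (D * z2 - qi * w2) * (D * z1 - qi * w2) /
      ((D * qi * z2 - w2) * (D * qi * z1 - w2))
      = ((D * Q * z2 - w2) * (D * Q * z1 - w2) * (D * Q * z1 - w1) * (D * z2 - Q * w1) * (qi * qi)) / ((D * z1 - Q * w2) * (D * Q * z1 - w1) * (D * z2 - Q * w2) * (D * z2 - Q * w1) * (qi * qi)) := by
    rw [r3, r1, r4, r2]
    rw [div_eq_div_iff (mul_ne_zero (mul_ne_zero hqi0 g4) (mul_ne_zero hqi0 g1)) hM]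
    ring
  have e6 : (D * z1 - qi * w2) * (D * z1 - Q * w1) * (D * Q * z2 - w1) * (D * z2 - qi * w2) /
      ((D * qi * z1 - w2) * (D * Q * z1 - w1) * (D * z2 - Q * w1) * (D * qi * z2 - w2))
      = ((D * Q * z1 - w2) * (D * z1 - Q * w1) * (D * Q * z2 - w1) * (D * Q * z2 - w2) * (qi * qi)) / ((D * z1 - Q * w2) * (D * Q * z1 - w1) * (D * z2 - Q * w2) * (D * z2 - Q * w1) * (qi * qi)) := by
    rw [r1, r2, r3, r4]
    rw [div_eq_div_iff (mul_ne_zero (mul_ne_zero (mul_ne_zero (mul_ne_zero hqi0 g1) g2) g3) (mul_ne_zero hqi0 g4)) hM]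
    ring
  have e7 : (D * z1 - qi * w2) * (D * z1 - Q * w1) * (D * Q * z2 - w1) /
      ((D * Q * z1 - w1) * (D * z2 - Q * w1) * (D * z1 - qi * w2))
      = ((D * z1 - Q * w1) * (D * Q * z2 - w1) * (D * z1 - Q * w2) * (D * z2 - Q * w2) * (qi * qi)) / ((D * z1 - Q * w2) * (D * Q * z1 - w1) * (D * z2 - Q * w2) * (D * z2 - Q * w1) * (qi * qi)) := by
    rw [r1]
    rw [div_eq_div_iff (mul_ne_zero (mul_ne_zero g2 g3) (mul_ne_zero hqi0 g5)) hM]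
    ring
  have e8 : (D * z1 - qi * w2) * (D * Q * z2 - w1) * (D * Q * z1 - w1) /
      ((D * qi * z1 - w2) * (D * Q * z1 - w1) * (D * z2 - Q * w1))
      = ((D * Q * z1 - w2) * (D * Q * z2 - w1) * (D * Q * z1 - w1) * (D * z2 - Q * w2) * (qi * qi)) / ((D * z1 - Q * w2) * (D * Q * z1 - w1) * (D * z2 - Q * w2) * (D * z2 - Q * w1) * (qi * qi)) := by
    rw [r1, r2]
    rw [div_eq_div_iff (mul_ne_zero (mul_ne_zero (mul_ne_zero hqi0 g1) g2) g3) hM]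
    ring
  have e9 : (Q + qi) * (D * z2 - qi * w2) / (D * qi * z2 - w2)
      = ((Q * Q + 1) * (D * Q * z2 - w2) * (D * z1 - Q * w2) * (D * Q * z1 - w1) * (D * z2 - Q * w1) * (qi * qi * qi)) / ((D * z1 - Q * w2) * (D * Q * z1 - w1) * (D * z2 - Q * w2) * (D * z2 - Q * w1) * (qi * qi)) := by
    rw [r5, r3, r4]
    rw [div_eq_div_iff (mul_ne_zero hqi0 g4) hM]
    ring
  have e10 : (Q + qi) * ((D * z1 - qi * w2) * (D * z1 - Q * w1) * (D * Q * z2 - w1)) /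
      ((D * qi * z1 - w2) * (D * Q * z1 - w1) * (D * z2 - Q * w1))
      = ((Q * Q + 1) * (D * Q * z1 - w2) * (D * z1 - Q * w1) * (D * Q * z2 - w1) * (D * z2 - Q * w2) * (qi * qi * qi)) / ((D * z1 - Q * w2) * (D * Q * z1 - w1) * (D * z2 - Q * w2) * (D * z2 - Q * w1) * (qi * qi)) := by
    rw [r5, r1, r2]
    rw [div_eq_div_iff (mul_ne_zero (mul_ne_zero (mul_ne_zero hqi0 g1) g2) g3) hM]
    ring
  rw [show (1 : K) = ((D * z1 - Q * w2) * (D * Q * z1 - w1) * (D * z2 - Q * w2) * (D * z2 - Q * w1) * (qi * qi)) / ((D * z1 - Q * w2) * (D * Q * z1 - w1) * (D * z2 - Q * w2) * (D * z2 - Q * w1) * (qi * qi)) from (div_self hM).symm]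
  rw [e2, e3, e4, e5, e6, e7, e8, e9, e10]
  simp only [← add_div, div_sub_div_same]
  rw [div_eq_zero_iff]
  refine Or.inl ?_
  linear_combination (-(((D * z1 - Q * w2) * (D * Q * z1 - w1) * (D * z2 - Q * w2) * (D * z2 - Q * w1) - (D * Q * z1 - w2) * (D * z1 - Q * w1) * (D * z2 - Q * w2) * (D * z2 - Q * w1) + (D * Q * z2 - w2) * (D * Q * z2 - w1) * (D * z1 - Q * w2) * (D * Q * z1 - w1) + (D * Q * z2 - w2) * (D * z1 - Q * w1) * (D * z1 - Q * w2) * (D * z2 - Q * w1) + (D * Q * z2 - w2) * (D * Q * z1 - w2) * (D * Q * z1 - w1) * (D * z2 - Q * w1) - (D * Q * z1 - w2) * (D * z1 - Q * w1) * (D * Q * z2 - w1) * (D * Q * z2 - w2) - (D * z1 - Q * w1) * (D * Q * z2 - w1) * (D * z1 - Q * w2) * (D * z2 - Q * w2) - (D * Q * z1 - w2) * (D * Q * z2 - w1) * (D * Q * z1 - w1) * (D * z2 - Q * w2)) * (qi * qi))) * hqi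

/-- The sum of the ten rational functions arising from the normal reordering of the
symmetrized quartic Serre relation
`Sym_{z₁,z₂}[E_m(z₁),[E_{m+1}(w₁),[E_m(z₂),E_{m-1}(w₂)]_q]_{q⁻¹}] = 0`
vanishes identically in `ℂ(z₁, z₂, w₁, w₂)`. -/
theorem serre_rational_identity (d q : ℂ) (hd : d ≠ 0) (hq : q ≠ 0) :
    let D := cconst d
    let Q := cconst q
    let z1 := rvar 0
    let z2 := rvar 1
    let w1 := rvar 2
    let w2 := rvar 3
    (1 : RatFuncField)
    - (D * z1 - Q⁻¹ * w2) * (D * z1 - Q * w1) /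
        ((D * Q⁻¹ * z1 - w2) * (D * Q * z1 - w1))
    + (D * z2 - Q⁻¹ * w2) * (D * Q * z2 - w1) /
        ((D * z2 - Q * w1) * (D * Q⁻¹ * z2 - w2))
    + (D * z2 - Q⁻¹ * w2) * (D * z1 - Q * w1) /
        ((D * Q⁻¹ * z2 - w2) * (D * Q * z1 - w1))
    + (D * z2 - Q⁻¹ * w2) * (D * z1 - Q⁻¹ * w2) /
        ((D * Q⁻¹ * z2 - w2) * (D * Q⁻¹ * z1 - w2))
    - (D * z1 - Q⁻¹ * w2) * (D * z1 - Q * w1) * (D * Q * z2 - w1) * (D * z2 - Q⁻¹ * w2) /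
        ((D * Q⁻¹ * z1 - w2) * (D * Q * z1 - w1) * (D * z2 - Q * w1) * (D * Q⁻¹ * z2 - w2))
    - (D * z1 - Q⁻¹ * w2) * (D * z1 - Q * w1) * (D * Q * z2 - w1) /
        ((D * Q * z1 - w1) * (D * z2 - Q * w1) * (D * z1 - Q⁻¹ * w2))
    - (D * z1 - Q⁻¹ * w2) * (D * Q * z2 - w1) * (D * Q * z1 - w1) /
        ((D * Q⁻¹ * z1 - w2) * (D * Q * z1 - w1) * (D * z2 - Q * w1))
    - (Q + Q⁻¹) * (D * z2 - Q⁻¹ * w2) / (D * Q⁻¹ * z2 - w2)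
    + (Q + Q⁻¹) * ((D * z1 - Q⁻¹ * w2) * (D * z1 - Q * w1) * (D * Q * z2 - w1)) /
        ((D * Q⁻¹ * z1 - w2) * (D * Q * z1 - w1) * (D * z2 - Q * w1))
    = 0 := by
  intro D Q z1 z2 w1 w2
  have hQ : Q ≠ 0 := cconst_ne_zero hq
  have hDQ : D * Q = cconst (d * q) := by rw [← cconst_mul]
  have g1 : D * z1 - Q * w2 ≠ 0 := denom_ne_zero hq (by decide)
  have g2 : D * Q * z1 - w1 ≠ 0 := by
    rw [hDQ]; exact denom_ne_zero' (mul_ne_zero hd hq) (by decide)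
  have g3 : D * z2 - Q * w1 ≠ 0 := denom_ne_zero hq (by decide)
  have g4 : D * z2 - Q * w2 ≠ 0 := denom_ne_zero hq (by decide)
  have g5 : D * Q * z1 - w2 ≠ 0 := by
    rw [hDQ]; exact denom_ne_zero' (mul_ne_zero hd hq) (by decide)
  exact serre_core D Q Q⁻¹ z1 z2 w1 w2 (mul_inv_cancel₀ hQ) g1 g2 g3 g4 g5
end
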